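/- arXiv:1109.6147 — 5 statements merged into one kernel-verified Lean document; each statement's English description precedes it below -/
import Mathlib

section
/- For 0 ≤ d < q, the sum over monic polynomials of degree d over GF(q) of 2^{(number of roots in GF(q))} equals q^d · Σ_{i=0}^{d} q^{−i}·C(q,i), i.e., Λ(N_{d,1}) = |N_{d,1}|·Σ_{i=0}^{d} q^{−i}·binom(q,i). -/
open Polynomial

noncomputable section
open scoped Classical

/-- Number of distinct roots of φ in F, with λ(constant) := 0. -/
def numRoots (F : Type) [Field F] [Fintype F] (φ : Polynomial F) : ℕ :=
  if φ.degree ≤ 0 then 0 else φ.roots.toFinset.card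

/-- Λ(M) = Σ_{φ∈M} 2^{λ(φ)}. -/
def Lam (F : Type) [Field F] [Fintype F] (M : Set (Polynomial F)) : ℕ :=
  ∑ᶠ φ ∈ M, 2 ^ (numRoots F φ)

/-- N_{d,j}: polynomials of degree at most d whose x^d coefficient is j. -/
def Ndj (F : Type) [Field F] (d : ℕ) (j : F) : Set (Polynomial F) :=
  {p : Polynomial F | p.coeff d = j ∧ p.degree ≤ (d : WithBot ℕ)}

/-- The Nisan-Wigderson set S_φ = {(x, φ(x)) : x ∈ GF(q)}. -/
def NWset (F : Type) [Field F] [Fintype F] (φ : Polynomial F) : Finset (F × F) :=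
  Finset.univ.image (fun j => (j, φ.eval j))

/-- The i-th polynomial in the base-q digit enumeration,
φ_i(x) = Σ_k ((⌊i/q^k⌋ mod q)·x^k), via a fixed bijection e : [q] ≃ GF(q). -/
def enumPoly (q : ℕ) (hq : 0 < q) {F : Type} [Field F] (e : Fin q ≃ F) (d i : ℕ) :
    Polynomial F :=
  ∑ k ∈ Finset.range (d + 1), Polynomial.C (e ⟨i / q ^ k % q, Nat.mod_lt _ hq⟩) * Polynomial.X ^ k

 

set_option linter.unusedSectionVars false

variable {F : Type} [Field F] [Fintype F]

/-- The finset of monic polynomials of natDegree n. -/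
def monicFinset (F : Type) [Field F] [Fintype F] (n : ℕ) : Finset (Polynomial F) :=
  (Finset.univ : Finset (Fin n → F)).image
    (fun c => X ^ n + ∑ k : Fin n, C (c k) * X ^ (k : ℕ))

lemma coeff_aux (n : ℕ) (c : Fin n → F) (m : ℕ) :
    (X ^ n + ∑ k : Fin n, C (c k) * X ^ (k : ℕ)).coeff m =
      if m = n then 1 else if h : m < n then c ⟨m, h⟩ else 0 := by
  rw [coeff_add, coeff_X_pow, Polynomial.finset_sum_coeff]
  simp only [coeff_C_mul, coeff_X_pow]
  by_cases hm : m = n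
  · subst hm
    rw [if_pos rfl, if_pos rfl, Finset.sum_eq_zero, add_zero]
    intro k _
    rw [if_neg (fun he : m = (k:ℕ) => Nat.ne_of_lt k.2 he.symm), mul_zero]
  · rw [if_neg hm, if_neg hm, zero_add]
    by_cases h : m < n
    · rw [dif_pos h, Finset.sum_eq_single (⟨m, h⟩ : Fin n)]
      · rw [if_pos rfl, mul_one]
      · intro k _ hk
        rw [if_neg (fun he : m = (k:ℕ) => hk (Fin.ext he.symm)), mul_zero]
      · intro h'; exact absurd (Finset.mem_univ _) h'
    · rw [dif_neg h, Finset.sum_eq_zero]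
      intro k _
      rw [if_neg (fun he : m = (k:ℕ) => h (he ▸ k.2)), mul_zero]

lemma mem_monicFinset {n : ℕ} {p : Polynomial F} :
    p ∈ monicFinset F n ↔ p.Monic ∧ p.natDegree = n := by
  constructor
  · rintro hp
    obtain ⟨c, -, rfl⟩ := Finset.mem_image.1 hp
    have hdeg : ∀ m, n < m → (X ^ n + ∑ k : Fin n, C (c k) * X ^ (k : ℕ)).coeff m = 0 := by
      intro m hm
      rw [coeff_aux]
      rw [if_neg (Nat.ne_of_gt hm), dif_neg (Nat.not_lt.2 hm.le)]
    have hn : (X ^ n + ∑ k : Fin n, C (c k) * X ^ (k : ℕ)).coeff n = 1 := by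
      rw [coeff_aux, if_pos rfl]
    have hne : (X ^ n + ∑ k : Fin n, C (c k) * X ^ (k : ℕ)) ≠ 0 := by
      intro h0; rw [h0, coeff_zero] at hn; exact zero_ne_one (α := F) hn
    have hle : (X ^ n + ∑ k : Fin n, C (c k) * X ^ (k : ℕ)).natDegree ≤ n := by
      exact natDegree_le_iff_coeff_eq_zero.2 hdeg
    have hge : n ≤ (X ^ n + ∑ k : Fin n, C (c k) * X ^ (k : ℕ)).natDegree :=
      le_natDegree_of_ne_zero (by rw [hn]; exact (one_ne_zero : (1:F) ≠ 0))
    have heq : (X ^ n + ∑ k : Fin n, C (c k) * X ^ (k : ℕ)).natDegree = n :=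
      le_antisymm hle hge
    refine ⟨?_, heq⟩
    unfold Polynomial.Monic Polynomial.leadingCoeff
    rw [heq, hn]
  · rintro ⟨hm, rfl⟩
    refine Finset.mem_image.2 ⟨fun k => p.coeff k, Finset.mem_univ _, ?_⟩
    ext m
    rw [coeff_aux]
    by_cases h1 : m = p.natDegree
    · subst h1; rw [if_pos rfl]; exact hm.symm
    · rw [if_neg h1]
      by_cases h2 : m < p.natDegree
      · rw [dif_pos h2]
      · rw [dif_neg h2]
        exact (p.coeff_eq_zero_of_natDegree_lt
          (lt_of_le_of_ne (Nat.not_lt.1 h2) (Ne.symm h1))).symm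

lemma card_monicFinset (n : ℕ) :
    (monicFinset F n).card = (Fintype.card F) ^ n := by
  rw [monicFinset, Finset.card_image_of_injective _ ?_, Finset.card_univ, Fintype.card_fun,
    Fintype.card_fin]
  intro c c' h
  funext k
  have := congrArg (fun p => Polynomial.coeff p (k : ℕ)) h
  simp only [coeff_aux] at this
  rw [if_neg (Nat.ne_of_lt k.2), dif_pos k.2, if_neg (Nat.ne_of_lt k.2), dif_pos k.2] at this
  simpa using this

lemma numRoots_monic {p : Polynomial F} (hp : p.Monic) :
    numRoots F p = p.roots.toFinset.card := by
  unfold numRoots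
  split_ifs with h
  · have h0 : p.natDegree = 0 := Nat.le_zero.1 (natDegree_le_iff_degree_le.2 (by simpa using h))
    have hp1 : p = 1 := by
      have := Polynomial.eq_C_of_natDegree_eq_zero h0
      rw [this]
      have : p.coeff 0 = 1 := by
        have := hp
        unfold Polynomial.Monic Polynomial.leadingCoeff at this
        rwa [h0] at this
      rw [this, map_one]
    rw [hp1]
    simp
  · rfl

lemma count_filter (d i : ℕ) (S : Finset F) (hS : S.card = i) (hid : i ≤ d) :
    ((monicFinset F d).filter (fun φ => S ⊆ φ.roots.toFinset)).card
      = (Fintype.card F) ^ (d - i) := by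
  rw [← card_monicFinset (F := F) (d - i)]
  set g : Polynomial F := ∏ a ∈ S, (X - C a) with hg
  have hgm : g.Monic := monic_prod_of_monic _ _ fun a _ => monic_X_sub_C a
  have hgd : g.natDegree = i := by
    rw [hg, natDegree_prod _ _ (fun a _ => X_sub_C_ne_zero a)]
    simp [hS]
  symm
  apply Finset.card_bij (fun ψ _ => g * ψ)
  · intro ψ hψ
    rw [mem_monicFinset] at hψ
    rw [Finset.mem_filter, mem_monicFinset]
    refine ⟨⟨hgm.mul hψ.1, ?_⟩, ?_⟩
    · rw [hgm.natDegree_mul hψ.1, hgd, hψ.2]; omega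
    · intro a ha
      rw [Multiset.mem_toFinset, mem_roots']
      refine ⟨mul_ne_zero hgm.ne_zero hψ.1.ne_zero, ?_⟩
      show (g * ψ).eval a = 0
      rw [eval_mul, hg, eval_prod, Finset.prod_eq_zero ha (by simp), zero_mul]
  · intro ψ hψ ψ' hψ' h
    exact mul_left_cancel₀ hgm.ne_zero h
  · intro φ hφ
    rw [Finset.mem_filter, mem_monicFinset] at hφ
    obtain ⟨⟨hmon, hdeg⟩, hroots⟩ := hφ
    have hdvd : g ∣ φ := by
      have h1 : S.val ≤ φ.roots := (Multiset.le_iff_subset S.nodup).2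
        (fun a ha => Multiset.mem_toFinset.1 (hroots ha))
      have h2 : (S.val.map fun a => X - C a) ≤ φ.roots.map fun a => X - C a :=
        Multiset.map_le_map h1
      calc g = (S.val.map fun a => X - C a).prod := by
              rw [hg, Finset.prod_eq_multiset_prod]
        _ ∣ (φ.roots.map fun a => X - C a).prod := Multiset.prod_dvd_prod_of_le h2
        _ ∣ φ := prod_multiset_X_sub_C_dvd φ
    obtain ⟨ψ, rfl⟩ := hdvd
    refine ⟨ψ, ?_, rfl⟩
    rw [mem_monicFinset]
    have hψm : ψ.Monic := hgm.of_mul_monic_left hmon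
    refine ⟨hψm, ?_⟩
    have h3 := hgm.natDegree_mul hψm
    omega

lemma count_filter_zero (d i : ℕ) (S : Finset F) (hS : S.card = i) (hid : d < i) :
    ((monicFinset F d).filter (fun φ => S ⊆ φ.roots.toFinset)).card = 0 := by
  rw [Finset.card_eq_zero, Finset.filter_eq_empty_iff]
  intro φ hφ hsub
  rw [mem_monicFinset] at hφ
  have h1 : S.card ≤ φ.roots.toFinset.card := Finset.card_le_card hsub
  have h2 : φ.roots.toFinset.card ≤ Multiset.card φ.roots := Multiset.toFinset_card_le _
  have h3 : Multiset.card φ.roots ≤ φ.natDegree := Polynomial.card_roots' φ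
  omega

lemma two_pow_card (R : Finset F) :
    2 ^ R.card = ((Finset.univ : Finset F).powerset.filter (fun S => S ⊆ R)).card := by
  rw [← Finset.card_powerset]
  congr 1
  ext S
  simp [Finset.mem_powerset, Finset.subset_univ]


/-- Lemma 4 of Leontev 2006: Λ(N_{d,1}) = |N_{d,1}|·Σ_{i=0}^{d} q^{−i}·C(q,i),
with |N_{d,1}| = q^d the number of monic degree-d polynomials. -/
theorem Lam_monic_eq (q d : ℕ) (F : Type) [Field F] [Fintype F]
    (hF : Fintype.card F = q) (hd : d < q) :
    (Lam F (Ndj F d 1) : ℚ) =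
      (q : ℚ) ^ d * ∑ i ∈ Finset.range (d + 1), (q : ℚ) ^ (-(i : ℤ)) * (q.choose i : ℚ) := by
  subst hF
  set q := Fintype.card F with hq
  have hq0 : 0 < q := Fintype.card_pos
  have hset : Ndj F d 1 = ↑(monicFinset F d) := by
    ext p
    simp only [Ndj, Set.mem_setOf_eq, Finset.mem_coe, mem_monicFinset]
    constructor
    · rintro ⟨h1, h2⟩
      have hnd : p.natDegree ≤ d := natDegree_le_iff_degree_le.2 h2
      have hdn : d ≤ p.natDegree :=
        le_natDegree_of_ne_zero (by rw [h1]; exact (one_ne_zero : (1:F) ≠ 0))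
      have hnd' : p.natDegree = d := le_antisymm hnd hdn
      refine ⟨?_, hnd'⟩
      unfold Polynomial.Monic Polynomial.leadingCoeff
      rw [hnd', h1]
    · rintro ⟨h1, h2⟩
      exact ⟨by rw [← h2]; exact h1, h2 ▸ degree_le_natDegree⟩
  have hLam : Lam F (Ndj F d 1) = ∑ φ ∈ monicFinset F d, 2 ^ numRoots F φ := by
    rw [Lam, hset, finsum_mem_coe_finset]
  have key : ∑ φ ∈ monicFinset F d, 2 ^ numRoots F φ
      = ∑ i ∈ Finset.range (d + 1), q.choose i * q ^ (d - i) := by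
    calc ∑ φ ∈ monicFinset F d, 2 ^ numRoots F φ
        = ∑ φ ∈ monicFinset F d, ((Finset.univ : Finset F).powerset.filter
            (fun S => S ⊆ φ.roots.toFinset)).card := by
          refine Finset.sum_congr rfl fun φ hφ => ?_
          rw [numRoots_monic (mem_monicFinset.1 hφ).1, two_pow_card]
      _ = ∑ S ∈ (Finset.univ : Finset F).powerset,
            ((monicFinset F d).filter (fun φ => S ⊆ φ.roots.toFinset)).card := by
          simp_rw [Finset.card_filter]
          exact Finset.sum_comm
      _ = ∑ i ∈ Finset.range (q + 1), ∑ S ∈ Finset.powersetCard i (Finset.univ : Finset F),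
            ((monicFinset F d).filter (fun φ => S ⊆ φ.roots.toFinset)).card := by
          rw [Finset.sum_powerset, Finset.card_univ]
      _ = ∑ i ∈ Finset.range (q + 1), (if i ≤ d then q.choose i * q ^ (d - i) else 0) := by
          refine Finset.sum_congr rfl fun i _ => ?_
          by_cases h : i ≤ d
          · rw [if_pos h,
              Finset.sum_congr rfl (fun S hS => count_filter d i S
                (Finset.mem_powersetCard.1 hS).2 h),
              Finset.sum_const, Finset.card_powersetCard, Finset.card_univ, smul_eq_mul]
          · rw [if_neg h, Finset.sum_eq_zero]
            intro S hS
            exact count_filter_zero d i S (Finset.mem_powersetCard.1 hS).2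
              (Nat.lt_of_not_le h)
      _ = ∑ i ∈ Finset.range (d + 1), (if i ≤ d then q.choose i * q ^ (d - i) else 0) := by
          refine (Finset.sum_subset (Finset.range_subset_range.2 (by omega)) ?_).symm
          intro i hi hni
          simp only [Finset.mem_range] at hi hni
          exact if_neg (by omega)
      _ = ∑ i ∈ Finset.range (d + 1), q.choose i * q ^ (d - i) :=
          Finset.sum_congr rfl fun i hi =>
            if_pos (Nat.lt_succ_iff.1 (Finset.mem_range.1 hi))
  rw [hLam, key]
  push_cast
  rw [Finset.mul_sum]
  refine Finset.sum_congr rfl fun i hi => ?_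
  have hi' : i ≤ d := Nat.lt_succ_iff.1 (Finset.mem_range.1 hi)
  have hqQ : (q : ℚ) ≠ 0 := Nat.cast_ne_zero.2 (by omega)
  rw [zpow_neg, zpow_natCast, pow_sub₀ _ hqQ hi']
  ring
end
end

section
/- The average over monic polynomials φ of degree d over GF(q) of 2^{λ(φ)}, where λ(φ) counts roots in GF(q), is at most (1 + 1/q)^q, and hence strictly less than e. -/
set_option linter.unusedSectionVars false
set_option maxHeartbeats 1000000


open Polynomial

noncomputable section
open scoped Classical

section AuxLemmas

variable {F : Type} [Field F] [Fintype F]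

lemma ndj_finite (d : ℕ) : (Ndj F d 1).Finite := by
  apply Set.Finite.of_finite_image (f := fun p : Polynomial F => fun i : Fin (d + 1) => p.coeff i)
    (Set.toFinite _)
  intro p hp r hr h
  ext n
  rcases le_or_gt n d with hn | hn
  · exact congrFun h ⟨n, Nat.lt_succ_of_le hn⟩
  · rw [coeff_eq_zero_of_degree_lt (lt_of_le_of_lt hp.2 (by exact_mod_cast hn)),
      coeff_eq_zero_of_degree_lt (lt_of_le_of_lt hr.2 (by exact_mod_cast hn))]

lemma mem_ndj_monic {d : ℕ} {φ : Polynomial F} (h : φ ∈ Ndj F d 1) :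
    φ.Monic ∧ φ.natDegree = d := by
  have hne : φ.coeff d ≠ 0 := by rw [h.1]; exact one_ne_zero
  have hdeg : φ.degree = d := le_antisymm h.2 (le_degree_of_ne_zero hne)
  have hnd : φ.natDegree = d := natDegree_eq_of_degree_eq_some hdeg
  refine ⟨?_, hnd⟩
  unfold Monic leadingCoeff
  rw [hnd, h.1]

lemma numRoots_eq {d : ℕ} {φ : Polynomial F} (h : φ ∈ Ndj F d 1) :
    numRoots F φ = φ.roots.toFinset.card := by
  obtain ⟨hm, hnd⟩ := mem_ndj_monic h
  unfold numRoots
  split_ifs with h0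
  · have : φ = 1 := hm.degree_le_zero_iff_eq_one.mp h0
    simp [this]
  · rfl

lemma eq_sum_fin {m : ℕ} {p : Polynomial F} (hp : p.degree < (m : WithBot ℕ)) :
    ∑ i : Fin m, monomial i.1 (p.coeff i.1) = p := by
  rw [Fin.sum_univ_eq_sum_range (fun j => monomial j (p.coeff j)) m]
  by_cases h0 : p = 0
  · simp [h0]
  · exact (p.as_sum_range' m ((natDegree_lt_iff_degree_lt h0).mpr hp)).symm

lemma count_le {d : ℕ} (M : Finset (Polynomial F)) (hM : ∀ φ ∈ M, φ ∈ Ndj F d 1) (S : Finset F) :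
    ((M.filter (fun φ => S ⊆ φ.roots.toFinset)).card : ℕ) ≤
      if S.card ≤ d then Fintype.card F ^ (d - S.card) else 0 := by
  split_ifs with hSd
  · set m := d - S.card with hm
    set g : Polynomial F := ∏ s ∈ S, (X - C s) with hg
    have hgmonic : g.Monic := monic_prod_of_monic _ _ fun s _ => monic_X_sub_C s
    have hgdeg : g.natDegree = S.card := by
      rw [hg, natDegree_prod _ _ (fun s _ => X_sub_C_ne_zero s)]
      simp
    have key : ∀ φ ∈ M.filter (fun φ => S ⊆ φ.roots.toFinset),
        g * (φ /ₘ g) = φ ∧ (φ /ₘ g).Monic ∧ (φ /ₘ g).natDegree = m := by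
      intro φ hφ
      rw [Finset.mem_filter] at hφ
      obtain ⟨hφM, hφS⟩ := hφ
      obtain ⟨hmon, hnd⟩ := mem_ndj_monic (hM φ hφM)
      have hdvd : g ∣ φ := by
        have hle : S.val ≤ φ.roots := by
          refine (Multiset.le_iff_subset S.nodup).mpr ?_
          intro x hx
          exact Multiset.mem_toFinset.mp (hφS hx)
        have := (Multiset.prod_X_sub_C_dvd_iff_le_roots hmon.ne_zero S.val).mpr hle
        rwa [hg, Finset.prod]
      obtain ⟨c, hc⟩ := hdvd
      have hdiv : φ /ₘ g = c := by rw [hc, mul_divByMonic_cancel_left _ hgmonic]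
      have hcmon : c.Monic := hgmonic.of_mul_monic_left (hc ▸ hmon)
      have hcdeg : c.natDegree = m := by
        have := hnd
        rw [hc, hgmonic.natDegree_mul hcmon, hgdeg] at this
        omega
      rw [hdiv]
      exact ⟨hc.symm, hcmon, hcdeg⟩
    set T : Finset (Polynomial F) :=
      (Finset.univ : Finset (Fin m → F)).image
        (fun c => ∑ i : Fin m, monomial i.1 (c i)) with hT
    have hTcard : T.card ≤ Fintype.card F ^ m := by
      calc T.card ≤ (Finset.univ : Finset (Fin m → F)).card := Finset.card_image_le
        _ = Fintype.card F ^ m := by simp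
    refine le_trans (Finset.card_le_card_of_injOn
      (fun φ => φ /ₘ g - X ^ m) ?_ ?_) hTcard
    · intro φ hφ
      obtain ⟨hc, hcmon, hcdeg⟩ := key φ hφ
      have hdlt : (φ /ₘ g - X ^ m).degree < (m : WithBot ℕ) := by
        have h1 : (φ /ₘ g).degree = (m : WithBot ℕ) := by
          rw [degree_eq_natDegree hcmon.ne_zero, hcdeg]
        have := degree_sub_lt (p := φ /ₘ g) (q := X ^ m)
          (by rw [h1, degree_X_pow]) hcmon.ne_zero
          (by rw [hcmon.leadingCoeff, leadingCoeff_X_pow])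
        rwa [h1] at this
      rw [hT, Finset.mem_coe, Finset.mem_image]
      exact ⟨fun i => (φ /ₘ g - X ^ m).coeff i.1, Finset.mem_univ _, eq_sum_fin hdlt⟩
    · intro φ1 h1 φ2 h2 heq
      obtain ⟨hc1, _, _⟩ := key φ1 h1
      obtain ⟨hc2, _, _⟩ := key φ2 h2
      have h : φ1 /ₘ g = φ2 /ₘ g := by
        have := congrArg (· + X ^ m) heq
        simpa using this
      rw [← hc1, ← hc2, h]
  · simp only [Nat.le_zero, Finset.card_eq_zero, Finset.filter_eq_empty_iff]
    intro φ hφ hS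
    obtain ⟨hmon, hnd⟩ := mem_ndj_monic (hM φ hφ)
    have h1 : S.card ≤ φ.roots.toFinset.card := Finset.card_le_card hS
    have h2 : φ.roots.toFinset.card ≤ Multiset.card φ.roots := Multiset.toFinset_card_le _
    have h3 : Multiset.card φ.roots ≤ φ.natDegree := φ.card_roots'
    omega

end AuxLemmas

/-- The average of 2^{λ(φ)} over monic degree-d polynomials over GF(q)
is at most (1+1/q)^q, hence strictly less than e. -/
theorem average_two_pow_numRoots_lt_e (q d : ℕ) (F : Type) [Field F] [Fintype F]
    (hF : Fintype.card F = q) (hd : d < q) :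
    (Lam F (Ndj F d 1) : ℝ) / (q : ℝ) ^ d ≤ (1 + 1 / (q : ℝ)) ^ q ∧
    (1 + 1 / (q : ℝ)) ^ q < Real.exp 1 := by
  have hq0 : 0 < q := lt_of_le_of_lt (Nat.zero_le d) hd
  have hqR : (0:ℝ) < q := by exact_mod_cast hq0
  have hqne : (q:ℝ) ≠ 0 := hqR.ne'
  constructor
  · -- main inequality
    have hfin := ndj_finite (F := F) d
    set M := hfin.toFinset with hMdef
    have hM : ∀ φ ∈ M, φ ∈ Ndj F d 1 := fun φ h => hfin.mem_toFinset.mp h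
    have hLam : Lam F (Ndj F d 1) = ∑ φ ∈ M, 2 ^ numRoots F φ := by
      rw [Lam, ← hfin.coe_toFinset, finsum_mem_coe_finset]
    have key : Lam F (Ndj F d 1) ≤
        ∑ j ∈ Finset.range (q + 1),
          (if j ≤ d then q ^ (d - j) else 0) * Nat.choose q j := by
      rw [hLam]
      have step1 : ∀ φ ∈ M, 2 ^ numRoots F φ =
          ∑ S ∈ (Finset.univ : Finset F).powerset,
            if S ⊆ φ.roots.toFinset then 1 else 0 := by
        intro φ hφ
        have hpow : φ.roots.toFinset.powerset =
            (Finset.univ : Finset F).powerset.filter (fun S => S ⊆ φ.roots.toFinset) := by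
          ext S
          simp [Finset.mem_powerset, Finset.subset_univ]
        rw [numRoots_eq (hM φ hφ), ← Finset.card_powerset, hpow, Finset.card_filter]
      calc ∑ φ ∈ M, 2 ^ numRoots F φ
          = ∑ φ ∈ M, ∑ S ∈ (Finset.univ : Finset F).powerset,
              if S ⊆ φ.roots.toFinset then 1 else 0 := Finset.sum_congr rfl step1
        _ = ∑ S ∈ (Finset.univ : Finset F).powerset, ∑ φ ∈ M,
              if S ⊆ φ.roots.toFinset then 1 else 0 := Finset.sum_comm
        _ = ∑ S ∈ (Finset.univ : Finset F).powerset,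
              (M.filter (fun φ => S ⊆ φ.roots.toFinset)).card := by
            refine Finset.sum_congr rfl fun S _ => ?_
            rw [Finset.card_filter]
        _ ≤ ∑ S ∈ (Finset.univ : Finset F).powerset,
              (if S.card ≤ d then Fintype.card F ^ (d - S.card) else 0) :=
            Finset.sum_le_sum fun S _ => count_le M hM S
        _ = ∑ j ∈ Finset.range (q + 1),
              (if j ≤ d then q ^ (d - j) else 0) * Nat.choose q j := by
            rw [Finset.powerset_card_disjiUnion]; erw [Finset.sum_disjiUnion]
            have hcard : (Finset.univ : Finset F).card = q := by rw [Finset.card_univ, hF]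
            rw [hcard]
            refine Finset.sum_congr rfl fun j hj => ?_
            have : ∀ S ∈ Finset.powersetCard j (Finset.univ : Finset F),
                (if S.card ≤ d then Fintype.card F ^ (d - S.card) else 0) =
                (if j ≤ d then q ^ (d - j) else 0) := by
              intro S hS
              rw [(Finset.mem_powersetCard.mp hS).2, hF]
            rw [Finset.sum_congr rfl this, Finset.sum_const,
              Finset.card_powersetCard, hcard, smul_eq_mul, mul_comm]
      -- done
    have keyR : (Lam F (Ndj F d 1) : ℝ) ≤
        ∑ j ∈ Finset.range (q + 1),
          (if j ≤ d then (q:ℝ) ^ (d - j) else 0) * Nat.choose q j := by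
      calc (Lam F (Ndj F d 1) : ℝ)
          ≤ ((∑ j ∈ Finset.range (q + 1),
              (if j ≤ d then q ^ (d - j) else 0) * Nat.choose q j : ℕ) : ℝ) := by
            exact_mod_cast key
        _ = _ := by push_cast; try ring
    calc (Lam F (Ndj F d 1) : ℝ) / (q : ℝ) ^ d
        ≤ (∑ j ∈ Finset.range (q + 1),
            (if j ≤ d then (q:ℝ) ^ (d - j) else 0) * Nat.choose q j) / (q : ℝ) ^ d := by
          gcongr
      _ = ∑ j ∈ Finset.range (q + 1),
            ((if j ≤ d then (q:ℝ) ^ (d - j) else 0) * Nat.choose q j) / (q : ℝ) ^ d :=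
          Finset.sum_div _ _ _
      _ ≤ ∑ j ∈ Finset.range (q + 1),
            (1 / (q:ℝ)) ^ j * 1 ^ (q - j) * Nat.choose q j := by
          refine Finset.sum_le_sum fun j hj => ?_
          split_ifs with hjd
          · have hpow : ((q:ℝ)) ^ d = (q:ℝ) ^ (d - j) * (q:ℝ) ^ j := by
              rw [← pow_add]
              congr 1
              omega
            rw [one_pow, mul_one, one_div, inv_pow, hpow]
            apply le_of_eq
            field_simp
          · have : (0:ℝ) * (Nat.choose q j : ℝ) / (q:ℝ) ^ d = 0 := by ring
            rw [this]
            positivity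
      _ = (1 / (q:ℝ) + 1) ^ q := (add_pow _ _ _).symm
      _ = (1 + 1 / (q : ℝ)) ^ q := by ring
  · -- (1+1/q)^q < e
    have h1 : (1 + 1 / (q:ℝ)) < Real.exp (1 / q) := by
      have := Real.add_one_lt_exp (x := 1 / (q:ℝ)) (by positivity)
      linarith
    calc (1 + 1 / (q:ℝ)) ^ q < (Real.exp (1 / q)) ^ q := by
          apply pow_lt_pow_left₀ h1 (by positivity) hq0.ne'
      _ = Real.exp 1 := by
          rw [← Real.exp_nat_mul, mul_one_div, div_self hqne]
end
end

section
/- For every positive integer d < q, Λ(N_{d,0}) ≤ Λ(N_{d,1}), where N_{d,0} is the set of polynomials of degree at most d−1 and N_{d,1} is the set of monic polynomials of degree d over GF(q). -/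
open Polynomial

noncomputable section
open scoped Classical

/-- The root set of φ, with the convention that constants have no roots. -/
def RS (F : Type) [Field F] (φ : Polynomial F) : Finset F :=
  if φ.degree ≤ 0 then ∅ else φ.roots.toFinset

lemma numRoots_eq_card_RS (F : Type) [Field F] [Fintype F] (φ : Polynomial F) :
    numRoots F φ = (RS F φ).card := by
  unfold numRoots RS
  split <;> simp

lemma RS_card_le_natDegree (F : Type) [Field F] (φ : Polynomial F) :
    (RS F φ).card ≤ φ.natDegree := by
  unfold RS
  split
  · simp
  · exact (φ.roots.toFinset_card_le).trans (Polynomial.card_roots' φ)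

lemma eval_eq_zero_of_mem_RS (F : Type) [Field F] {φ : Polynomial F} {a : F}
    (ha : a ∈ RS F φ) : φ.eval a = 0 := by
  unfold RS at ha
  split at ha
  · simp at ha
  · rw [Multiset.mem_toFinset, Polynomial.mem_roots] at ha
    · exact ha
    · intro h0
      simp [h0] at *

lemma Ndj_finite (F : Type) [Field F] [Fintype F] (d : ℕ) (j : F) :
    (Ndj F d j).Finite := by
  apply Set.Finite.of_finite_image (f := fun p : Polynomial F => fun k : Fin (d + 1) => p.coeff k)
  · exact Set.toFinite _
  · intro p hp r hr h
    ext n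
    by_cases hn : n ≤ d
    · exact congrFun h ⟨n, Nat.lt_succ_of_le hn⟩
    · rw [Polynomial.coeff_eq_zero_of_degree_lt, Polynomial.coeff_eq_zero_of_degree_lt]
      · exact lt_of_le_of_lt hr.2 (by exact_mod_cast Nat.lt_of_not_le hn)
      · exact lt_of_le_of_lt hp.2 (by exact_mod_cast Nat.lt_of_not_le hn)

/-- For every positive integer d < q, Λ(N_{d,0}) ≤ Λ(N_{d,1}). -/
theorem Lam_Nd0_le_Lam_Nd1 (q d : ℕ) (F : Type) [Field F] [Fintype F]
    (hF : Fintype.card F = q) (hd1 : 1 ≤ d) (hd : d < q) :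
    Lam F (Ndj F d 0) ≤ Lam F (Ndj F d 1) := by
  classical
  have h0 : (Ndj F d 0).Finite := Ndj_finite F d 0
  have h1 : (Ndj F d 1).Finite := Ndj_finite F d 1
  rw [Lam, Lam, ← h0.coe_toFinset, ← h1.coe_toFinset, finsum_mem_coe_finset,
    finsum_mem_coe_finset]
  have key : ∀ φ : Polynomial F, 2 ^ numRoots F φ = ((RS F φ).powerset).card := by
    intro φ
    rw [Finset.card_powerset, numRoots_eq_card_RS]
  simp only [key]
  rw [← Finset.card_sigma, ← Finset.card_sigma]
  -- auxiliary facts about the map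
  have haux : ∀ x : Σ _ : Polynomial F, Finset F,
      x ∈ h0.toFinset.sigma (fun φ => (RS F φ).powerset) →
      (Polynomial.X ^ (d - x.2.card) * ∏ a ∈ x.2, (Polynomial.X - Polynomial.C a)).Monic ∧
      (Polynomial.X ^ (d - x.2.card) * ∏ a ∈ x.2, (Polynomial.X - Polynomial.C a)).natDegree
        = d := by
    rintro ⟨φ, S⟩ hx
    dsimp only at *
    rw [Finset.mem_sigma, Finset.mem_powerset, Set.Finite.mem_toFinset] at hx
    obtain ⟨hφ, hS⟩ := hx
    have hmonicProd : (∏ a ∈ S, (Polynomial.X - Polynomial.C a)).Monic :=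
      Polynomial.monic_prod_of_monic _ _ (fun a _ => Polynomial.monic_X_sub_C a)
    have hmonic : (Polynomial.X ^ (d - S.card) *
        ∏ a ∈ S, (Polynomial.X - Polynomial.C a)).Monic :=
      (Polynomial.monic_X_pow _).mul hmonicProd
    have hcard : S.card ≤ d := by
      refine le_trans (Finset.card_le_card hS) ?_
      refine le_trans (RS_card_le_natDegree F φ) ?_
      exact Polynomial.natDegree_le_iff_degree_le.2 hφ.2
    have hdegProd : (∏ a ∈ S, (Polynomial.X - Polynomial.C a)).natDegree = S.card := by
      rw [Polynomial.natDegree_prod_of_monic _ _ (fun a _ => Polynomial.monic_X_sub_C a)]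
      simp [Polynomial.natDegree_X_sub_C]
    refine ⟨hmonic, ?_⟩
    rw [Polynomial.natDegree_mul (Polynomial.monic_X_pow _).ne_zero hmonicProd.ne_zero,
      Polynomial.natDegree_X_pow, hdegProd]
    omega
  apply Finset.card_le_card_of_injOn
    (fun x => ⟨x.1 + Polynomial.X ^ (d - x.2.card) *
      ∏ a ∈ x.2, (Polynomial.X - Polynomial.C a), x.2⟩)
  · rintro ⟨φ, S⟩ hx
    obtain ⟨hmonic, hdeg⟩ := haux ⟨φ, S⟩ hx
    rw [Finset.mem_coe, Finset.mem_sigma, Finset.mem_powerset, Set.Finite.mem_toFinset] at hx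
    obtain ⟨hφ, hS⟩ := hx
    set g : Polynomial F := Polynomial.X ^ (d - S.card) *
      ∏ a ∈ S, (Polynomial.X - Polynomial.C a) with hg
    have hcoeffg : g.coeff d = 1 := by
      have := hmonic.coeff_natDegree
      rwa [hdeg] at this
    have hcoeff : (φ + g).coeff d = 1 := by
      rw [Polynomial.coeff_add, hφ.1, hcoeffg, zero_add]
    have hdegle : (φ + g).degree ≤ (d : WithBot ℕ) := by
      refine le_trans (Polynomial.degree_add_le _ _) (max_le hφ.2 ?_)
      rw [Polynomial.degree_eq_natDegree hmonic.ne_zero, hdeg]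
    have hne : φ + g ≠ 0 := fun h => by simp [h] at hcoeff
    have hbig : ¬ (φ + g).degree ≤ 0 := by
      intro h
      have hled : (d : WithBot ℕ) ≤ (φ + g).degree :=
        Polynomial.le_degree_of_ne_zero (by rw [hcoeff]; exact one_ne_zero)
      have : (d : WithBot ℕ) ≤ 0 := le_trans hled h
      have : (d : WithBot ℕ) ≤ ((0 : ℕ) : WithBot ℕ) := by exact_mod_cast this
      rw [Nat.cast_le] at this
      omega
    rw [Finset.mem_coe, Finset.mem_sigma, Finset.mem_powerset, Set.Finite.mem_toFinset]
    constructor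
    · exact ⟨hcoeff, hdegle⟩
    · intro a ha
      have hroot : (φ + g).eval a = 0 := by
        have h1 : φ.eval a = 0 := eval_eq_zero_of_mem_RS F (hS ha)
        have h2 : g.eval a = 0 := by
          rw [hg, Polynomial.eval_mul, Polynomial.eval_prod]
          rw [Finset.prod_eq_zero ha (by simp)]
          ring
        simp [h1, h2]
      unfold RS
      rw [if_neg hbig, Multiset.mem_toFinset, Polynomial.mem_roots hne]
      exact hroot
  · rintro ⟨φ₁, S₁⟩ h₁ ⟨φ₂, S₂⟩ h₂ h
    simp only [Sigma.mk.inj_iff] at h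
    obtain ⟨hfst, hsnd⟩ := h
    have hSeq : S₁ = S₂ := eq_of_heq hsnd
    subst hSeq
    have : φ₁ = φ₂ := by
      exact add_right_cancel hfst
    simp [this]
end
end

section
/- With the base-q digit enumeration φ_i of polynomials of degree at most d over GF(q), for every i < q^q one has Σ_{j=0}^{i} 2^{λ(φ_i − φ_j)} = Σ_{k=k*}^{d} a_k·Λ(N_{k,1}) − Λ(N_{k*,1}) + Λ(N_{k*,0}), where d = ⌊log(i+1)/log q⌋, a_k = ⌊(i+1)/q^k⌋ mod q, and k* is the smallest k with a_k ≠ 0. -/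
open Polynomial

noncomputable section
open scoped Classical
set_option linter.unusedSectionVars false
set_option linter.unusedVariables false
set_option maxHeartbeats 1000000

-- N2
theorem sum_digits {q : ℕ} (hq0 : 0 < q) : ∀ (m : ℕ) (r : ℕ), r < q ^ m →
    ∑ k ∈ Finset.range m, (r / q ^ k % q) * q ^ k = r := by
  intro m
  induction m with
  | zero => intro r hr; simp at hr ⊢; omega
  | succ m ih =>
    intro r hr
    rw [Finset.sum_range_succ']
    have h2 : r / q < q ^ m := by
      rw [Nat.div_lt_iff_lt_mul hq0]; rw [pow_succ] at hr; omega
    have h3 := ih (r / q) h2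
    have heq : ∀ k ∈ Finset.range m, r / q ^ (k+1) % q * q ^ (k+1)
        = q * ((r / q) / q ^ k % q * q ^ k) := by
      intro k _
      rw [Nat.div_div_eq_div_mul, ← pow_succ']
      ring
    rw [Finset.sum_congr rfl heq, ← Finset.mul_sum, h3]
    simp only [pow_zero, mul_one, Nat.div_one]
    exact Nat.div_add_mod r q

-- N5
theorem digits_spec {q : ℕ} (hq0 : 0 < q) : ∀ (m : ℕ) (v : ℕ → ℕ), (∀ k, k < m → v k < q) →
    (∑ k ∈ Finset.range m, v k * q ^ k) < q ^ m ∧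
    (∀ j, j < m → (∑ k ∈ Finset.range m, v k * q ^ k) / q ^ j % q = v j) := by
  intro m
  induction m with
  | zero => intro v _; simp
  | succ m ih =>
    intro v hv
    set r' := ∑ k ∈ Finset.range m, v (k+1) * q ^ k with hr'
    obtain ⟨h1, h2⟩ := ih (fun k => v (k+1)) (fun k hk => hv _ (by omega))
    have hsum : ∑ k ∈ Finset.range (m+1), v k * q ^ k = v 0 + q * r' := by
      rw [Finset.sum_range_succ']
      rw [hr', Finset.mul_sum]
      simp only [pow_zero, mul_one, Nat.div_one]
      rw [add_comm]
      congr 1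
      apply Finset.sum_congr rfl
      intro k _
      rw [pow_succ']
      ring
    have hv0 : v 0 < q := hv 0 (by omega)
    have hlt : v 0 + q * r' < q ^ (m+1) := by
      rw [pow_succ']
      have : r' + 1 ≤ q ^ m := h1
      calc v 0 + q * r' < q + q * r' := by omega
        _ = q * (r' + 1) := by ring
        _ ≤ q * q ^ m := by exact Nat.mul_le_mul_left q this
    constructor
    · rw [hsum]; exact hlt
    · intro j hj
      rw [hsum]
      match j with
      | 0 => simp [Nat.add_mul_mod_self_left, Nat.mod_eq_of_lt hv0]
      | j+1 =>
        have hdiv : (v 0 + q * r') / q ^ (j+1) = r' / q ^ j := by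
          rw [pow_succ', ← Nat.div_div_eq_div_mul]
          congr 1
          rw [mul_comm q r', Nat.add_mul_div_right _ _ hq0, Nat.div_eq_of_lt hv0, zero_add]
        rw [hdiv]
        exact h2 j (by omega)

-- N3
theorem dig_add_high {q : ℕ} (hq0 : 0 < q) {k s : ℕ} (hk : k < s) (T a : ℕ) :
    (T * q ^ s + a) / q ^ k % q = a / q ^ k % q := by
  have h1 : T * q ^ s = T * q ^ (s - k - 1) * q * q ^ k := by
    rw [mul_assoc, mul_assoc, ← pow_succ', ← pow_add]
    congr 2
    omega
  rw [h1, add_comm, Nat.add_mul_div_right _ _ (pow_pos hq0 k)]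
  rw [Nat.add_mul_mod_self_right]

-- N4
theorem dig_top {q : ℕ} (hq0 : 0 < q) {s : ℕ} {a : ℕ} (ha : a < q ^ s) (T : ℕ) :
    (T * q ^ s + a) / q ^ s = T := by
  rw [add_comm, Nat.add_mul_div_right _ _ (pow_pos hq0 s), Nat.div_eq_of_lt ha, zero_add]
theorem pow_mul_pred_div {q : ℕ} (hq0 : 0 < q) {k m : ℕ} (hm : m ≤ k) {M : ℕ} (hM : 1 ≤ M) :
    (q ^ k * M - 1) / q ^ m = q ^ (k - m) * M - 1 := by
  have hsplit : q ^ k = q ^ (k - m) * q ^ m := by rw [← pow_add]; congr 1; omega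
  have hpm : 0 < q ^ m := pow_pos hq0 _
  have hpkm : 0 < q ^ (k - m) := pow_pos hq0 _
  have hprod : 0 < q ^ (k - m) * M := Nat.mul_pos hpkm hM
  have key : q ^ k * M - 1 = (q ^ (k - m) * M - 1) * q ^ m + (q ^ m - 1) := by
    rw [Nat.sub_mul, hsplit]
    have hcm : q ^ (k - m) * M * q ^ m = q ^ (k - m) * q ^ m * M := by ring
    have hge : 1 * q ^ m ≤ q ^ (k - m) * M * q ^ m := Nat.mul_le_mul_right _ hprod
    omega
  rw [key, add_comm, Nat.add_mul_div_right _ _ hpm, Nat.div_eq_of_lt (by omega), zero_add]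

theorem mul_pred_mod {q : ℕ} (hq0 : 0 < q) {W : ℕ} (hW : 1 ≤ W) :
    (q * W - 1) % q = q - 1 := by
  have hc : q * W = W * q := Nat.mul_comm q W
  have h1 : 1 * q ≤ W * q := Nat.mul_le_mul_right _ hW
  have key : q * W - 1 = (q - 1) + (W - 1) * q := by
    rw [Nat.sub_mul]
    omega
  rw [key, Nat.add_mul_mod_self_right, Nat.mod_eq_of_lt (by omega)]

theorem dig_pow_mul_pred_lt {q : ℕ} (hq0 : 0 < q) {k m : ℕ} (hm : m < k) {M : ℕ} (hM : 1 ≤ M) :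
    (q ^ k * M - 1) / q ^ m % q = q - 1 := by
  rw [pow_mul_pred_div hq0 (le_of_lt hm) hM]
  have h2 : q ^ (k - m) * M = q * (q ^ (k - m - 1) * M) := by
    rw [← mul_assoc, ← pow_succ']
    congr 2
    omega
  rw [h2]
  exact mul_pred_mod hq0 (Nat.mul_pos (pow_pos hq0 _) hM)

theorem pred_div_eq {q : ℕ} (hq0 : 0 < q) {M : ℕ} (hMq : M % q ≠ 0) {s : ℕ} (hs : 1 ≤ s) :
    (M - 1) / q ^ s = M / q ^ s := by
  have hps : 0 < q ^ s := pow_pos hq0 _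
  have hmod : M % q ^ s ≠ 0 := by
    intro h
    apply hMq
    exact Nat.mod_eq_zero_of_dvd (dvd_trans (dvd_pow_self q (by omega)) (Nat.dvd_of_mod_eq_zero h))
  have hdm : M / q ^ s * q ^ s + M % q ^ s = M := Nat.div_add_mod' M (q ^ s)
  have hmlt : M % q ^ s < q ^ s := Nat.mod_lt _ hps
  calc (M - 1) / q ^ s
      = ((M % q ^ s - 1) + M / q ^ s * q ^ s) / q ^ s := by
        congr 1
        generalize M / q ^ s * q ^ s = A at hdm ⊢
        generalize M % q ^ s = B at hdm hmod ⊢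
        omega
    _ = (M % q ^ s - 1) / q ^ s + M / q ^ s := Nat.add_mul_div_right _ _ hps
    _ = M / q ^ s := by
        rw [Nat.div_eq_of_lt (by omega), zero_add]
theorem sum_range_mul {M : Type*} [AddCommMonoid M] (f : ℕ → M) (T B : ℕ) :
    ∑ j ∈ Finset.range (T * B), f j
      = ∑ t ∈ Finset.range T, ∑ r ∈ Finset.range B, f (t * B + r) := by
  induction T with
  | zero => simp
  | succ T ih =>
    rw [Finset.sum_range_succ, ← ih, add_mul, one_mul, Finset.sum_range_add]

section Aux
variable {q : ℕ} (hq0 : 0 < q) {F : Type} [Field F] [Fintype F] (e : Fin q ≃ F)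

/-- parametrized polynomial -/
def gpoly (m : ℕ) (b : ℕ → F) (c : F) (r : ℕ) : Polynomial F :=
  C c * X ^ m + ∑ k ∈ Finset.range m, C (b k - e ⟨r / q ^ k % q, Nat.mod_lt _ hq0⟩) * X ^ k

theorem gpoly_coeff_lt (m : ℕ) (b : ℕ → F) (c : F) (r : ℕ) {j : ℕ} (hj : j < m) :
    (gpoly hq0 e m b c r).coeff j = b j - e ⟨r / q ^ j % q, Nat.mod_lt _ hq0⟩ := by
  rw [gpoly, coeff_add, coeff_C_mul, coeff_X_pow, if_neg (by omega), finset_sum_coeff]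
  simp only [coeff_C_mul, coeff_X_pow]
  rw [Finset.sum_eq_single j]
  · simp
  · intro k _ hk; simp [Ne.symm hk]
  · intro h; exact absurd (Finset.mem_range.mpr hj) h

theorem gpoly_coeff_m (m : ℕ) (b : ℕ → F) (c : F) (r : ℕ) :
    (gpoly hq0 e m b c r).coeff m = c := by
  rw [gpoly, coeff_add, coeff_C_mul, coeff_X_pow, if_pos rfl, finset_sum_coeff]
  simp only [coeff_C_mul, coeff_X_pow]
  rw [Finset.sum_eq_zero, mul_one, add_zero]
  intro k hk
  rw [if_neg, mul_zero]
  exact fun h => by simp at hk; omega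

theorem gpoly_degree_le (m : ℕ) (b : ℕ → F) (c : F) (r : ℕ) :
    (gpoly hq0 e m b c r).degree ≤ (m : WithBot ℕ) := by
  apply le_trans (degree_add_le _ _) (max_le (degree_C_mul_X_pow_le _ _) _)
  apply le_trans (degree_sum_le _ _)
  apply Finset.sup_le
  intro k hk
  exact le_trans (degree_C_mul_X_pow_le _ _) (by
    simp only [Finset.mem_range] at hk
    exact_mod_cast Nat.cast_le.mpr (le_of_lt (lt_of_lt_of_le hk (le_refl m))))

theorem gpoly_injOn (m : ℕ) (b : ℕ → F) (c : F) :
    ∀ r ∈ Finset.range (q ^ m), ∀ r' ∈ Finset.range (q ^ m),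
      gpoly hq0 e m b c r = gpoly hq0 e m b c r' → r = r' := by
  intro r hr r' hr' h
  rw [Finset.mem_range] at hr hr'
  rw [← sum_digits hq0 m r hr, ← sum_digits hq0 m r' hr']
  apply Finset.sum_congr rfl
  intro k hk
  rw [Finset.mem_range] at hk
  have := congrArg (fun p => Polynomial.coeff p k) h
  simp only [gpoly_coeff_lt hq0 e m b c _ hk] at this
  have h2 : (⟨r / q ^ k % q, Nat.mod_lt _ hq0⟩ : Fin q) = ⟨r' / q ^ k % q, Nat.mod_lt _ hq0⟩ :=
    e.injective (sub_right_injective this)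
  rw [Fin.mk.injEq] at h2
  rw [h2]

theorem lam_eq_param (m : ℕ) (b : ℕ → F) (c : F) :
    Lam F (Ndj F m c) = ∑ r ∈ Finset.range (q ^ m), 2 ^ numRoots F (gpoly hq0 e m b c r) := by
  have hinj := gpoly_injOn hq0 e m b c
  have himg : Ndj F m c = ↑((Finset.range (q ^ m)).image (gpoly hq0 e m b c)) := by
    ext p
    simp only [Finset.coe_image, Set.mem_image, Finset.mem_coe, Finset.mem_range, Ndj,
      Set.mem_setOf_eq]
    constructor
    · rintro ⟨hc, hd⟩
      refine ⟨∑ k ∈ Finset.range m, ((e.symm (b k - p.coeff k)) : ℕ) * q ^ k, ?_, ?_⟩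
      · exact (digits_spec hq0 m _ (fun k _ => (e.symm (b k - p.coeff k)).isLt)).1
      · obtain ⟨_, hdig⟩ := digits_spec hq0 m (fun k => ((e.symm (b k - p.coeff k)) : ℕ))
          (fun k _ => (e.symm (b k - p.coeff k)).isLt)
        ext j
        rcases lt_trichotomy j m with hj | hj | hj
        · rw [gpoly_coeff_lt hq0 e m b c _ hj]
          have : (⟨(∑ k ∈ Finset.range m, ((e.symm (b k - p.coeff k)) : ℕ) * q ^ k) / q ^ j % q,
              Nat.mod_lt _ hq0⟩ : Fin q) = e.symm (b j - p.coeff j) := by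
            apply Fin.ext
            simpa using hdig j hj
          rw [this, Equiv.apply_symm_apply]
          ring
        · subst hj; rw [gpoly_coeff_m, hc]
        · rw [coeff_eq_zero_of_degree_lt, coeff_eq_zero_of_degree_lt]
          · exact lt_of_le_of_lt hd (by exact_mod_cast hj)
          · exact lt_of_le_of_lt (gpoly_degree_le hq0 e m b c _) (by exact_mod_cast hj)
    · rintro ⟨r, hr, rfl⟩
      exact ⟨gpoly_coeff_m hq0 e m b c r, gpoly_degree_le hq0 e m b c r⟩
  rw [Lam, himg, finsum_mem_coe_finset, Finset.sum_image hinj]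

theorem lam_scale (m : ℕ) {c : F} (hc : c ≠ 0) :
    Lam F (Ndj F m c) = Lam F (Ndj F m 1) := by
  have hdeg : ∀ p : Polynomial F, (C c * p).degree = p.degree := by
    intro p
    rw [degree_mul, degree_C hc, zero_add]
  have hnum : ∀ p : Polynomial F, numRoots F (C c * p) = numRoots F p := by
    intro p
    rw [numRoots, numRoots, hdeg, roots_C_mul _ hc]
  rw [Lam, Lam]
  refine (finsum_mem_eq_of_bijOn (fun p => C c * p) ⟨?_, ?_, ?_⟩ ?_).symm
  · rintro p ⟨h1, h2⟩
    exact ⟨by rw [coeff_C_mul, h1, mul_one], by rw [hdeg]; exact h2⟩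
  · intro p _ p' _ h
    exact mul_left_cancel₀ (C_ne_zero.mpr hc) h
  · rintro p ⟨h1, h2⟩
    refine ⟨C c⁻¹ * p, ⟨?_, ?_⟩, ?_⟩
    · rw [coeff_C_mul, h1, inv_mul_cancel₀ hc]
    · rwa [degree_mul, degree_C (inv_ne_zero hc), zero_add]
    · show C c * (C c⁻¹ * p) = p
      rw [← mul_assoc, ← C_mul, mul_inv_cancel₀ hc, C_1, one_mul]
  · intro p _
    rw [hnum]

include hq0 e in
theorem lam_zero_one : Lam F (Ndj F 0 (1 : F)) = 1 := by
  rw [lam_eq_param hq0 e 0 (fun _ => 0) 1]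
  rw [pow_zero, Finset.sum_range_one]
  have : numRoots F (gpoly hq0 e 0 (fun _ => 0) 1 0) = 0 := by
    rw [numRoots, if_pos]
    rw [gpoly, Finset.range_zero, Finset.sum_empty, add_zero]
    exact le_trans (degree_C_mul_X_pow_le _ _) (by norm_num)
  rw [this]
  norm_num

theorem main_sum (d : ℕ) : ∀ i, i < q ^ (d + 1) →
    ∑ j ∈ Finset.range (i + 1),
      2 ^ numRoots F (∑ k ∈ Finset.range (d + 1),
        C (e ⟨i / q ^ k % q, Nat.mod_lt _ hq0⟩ - e ⟨j / q ^ k % q, Nat.mod_lt _ hq0⟩) * X ^ k)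
    = 1 + ∑ m ∈ Finset.range (d + 1), (i / q ^ m % q) * Lam F (Ndj F m 1) := by
  induction d with
  | zero =>
    intro i hi
    rw [pow_one] at hi
    have hiq : i % q = i := Nat.mod_eq_of_lt hi
    have hnum : ∀ j : ℕ, numRoots F (∑ k ∈ Finset.range 1,
        C (e ⟨i / q ^ k % q, Nat.mod_lt _ hq0⟩ - e ⟨j / q ^ k % q, Nat.mod_lt _ hq0⟩) * X ^ k)
        = 0 := by
      intro j
      rw [numRoots, if_pos]
      rw [Finset.sum_range_one]
      exact le_trans (degree_C_mul_X_pow_le _ _) (by norm_num)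
    rw [Finset.sum_congr rfl (fun j _ => by rw [hnum j, pow_zero])]
    rw [Finset.sum_const, Finset.card_range, smul_eq_mul, mul_one]
    rw [Finset.sum_range_one, pow_zero, Nat.div_one, hiq, lam_zero_one hq0 e, mul_one]
    omega
  | succ d ih =>
    intro i hi
    set B := q ^ (d + 1) with hB
    have hBpos : 0 < B := pow_pos hq0 _
    set T := i / B with hT
    set rest := i % B with hrest
    have hTq : T < q := by
      rw [hT, hB, Nat.div_lt_iff_lt_mul hBpos]
      rw [pow_succ] at hi
      exact lt_of_lt_of_le hi (by rw [mul_comm])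
    have hrB : rest < B := Nat.mod_lt _ hBpos
    have hiTB : i = T * B + rest := (Nat.div_add_mod' i B).symm
    have emk : ∀ x y : ℕ, x % q = y % q →
        e ⟨x % q, Nat.mod_lt _ hq0⟩ = e ⟨y % q, Nat.mod_lt _ hq0⟩ := by
      intro x y h
      congr 1
      exact Fin.ext h
    have hdig_low : ∀ k, k < d + 1 → i / q ^ k % q = rest / q ^ k % q := by
      intro k hk
      conv_lhs => rw [hiTB]
      rw [hB]
      exact dig_add_high hq0 hk T rest
    have hdig_shift : ∀ t k, k < d + 1 → ∀ a, (t * B + a) / q ^ k % q = a / q ^ k % q := by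
      intro t k hk a
      rw [hB]
      exact dig_add_high hq0 hk t a
    have hdig_topd : ∀ a, a < B → ∀ t : ℕ, (t * B + a) / q ^ (d+1) = t := by
      intro a ha t
      rw [hB]
      rw [hB] at ha
      exact dig_top hq0 ha t
    have hitop : i / q ^ (d + 1) = T := by rw [hT, hB]
    have hsplit : Finset.range (i + 1) = Finset.range (T * B) ∪ Finset.Ico (T * B) (i + 1) := by
      rw [Finset.range_eq_Ico, Finset.range_eq_Ico]
      rw [Finset.Ico_union_Ico_eq_Ico (by omega) (by omega)]
    have hdisj : Disjoint (Finset.range (T * B)) (Finset.Ico (T * B) (i + 1)) := by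
      rw [Finset.range_eq_Ico]
      exact Finset.Ico_disjoint_Ico_consecutive 0 (T * B) (i + 1)
    -- Part A : the top block
    have hA : ∑ j ∈ Finset.Ico (T * B) (i + 1),
        2 ^ numRoots F (∑ k ∈ Finset.range (d + 1 + 1),
          C (e ⟨i / q ^ k % q, Nat.mod_lt _ hq0⟩ - e ⟨j / q ^ k % q, Nat.mod_lt _ hq0⟩) * X ^ k)
        = 1 + ∑ m ∈ Finset.range (d + 1), (i / q ^ m % q) * Lam F (Ndj F m 1) := by
      rw [Finset.sum_Ico_eq_sum_range]
      have hcount : i + 1 - T * B = rest + 1 := by omega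
      rw [hcount]
      have hpoly : ∀ j' ∈ Finset.range (rest + 1),
          (∑ k ∈ Finset.range (d + 1 + 1),
            C (e ⟨i / q ^ k % q, Nat.mod_lt _ hq0⟩
              - e ⟨(T * B + j') / q ^ k % q, Nat.mod_lt _ hq0⟩) * X ^ k)
          = ∑ k ∈ Finset.range (d + 1),
            C (e ⟨rest / q ^ k % q, Nat.mod_lt _ hq0⟩
              - e ⟨j' / q ^ k % q, Nat.mod_lt _ hq0⟩) * X ^ k := by
        intro j' hj'
        rw [Finset.mem_range] at hj'
        have hj'B : j' < B := by omega
        rw [Finset.sum_range_succ]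
        have htop : e ⟨i / q ^ (d+1) % q, Nat.mod_lt _ hq0⟩
            = e ⟨(T * B + j') / q ^ (d+1) % q, Nat.mod_lt _ hq0⟩ :=
          emk _ _ (by rw [hitop, hdig_topd j' hj'B T])
        rw [htop, sub_self, map_zero, zero_mul, add_zero]
        apply Finset.sum_congr rfl
        intro k hk
        rw [Finset.mem_range] at hk
        rw [emk (i / q ^ k) (rest / q ^ k) (hdig_low k hk),
          emk ((T * B + j') / q ^ k) (j' / q ^ k) (hdig_shift T k hk j')]
      rw [Finset.sum_congr rfl (fun j' hj' => by rw [hpoly j' hj'])]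
      rw [ih rest hrB]
      congr 1
      apply Finset.sum_congr rfl
      intro m hm
      rw [Finset.mem_range] at hm
      rw [hdig_low m hm]
    -- Part B : the lower blocks
    have hBsum : ∑ j ∈ Finset.range (T * B),
        2 ^ numRoots F (∑ k ∈ Finset.range (d + 1 + 1),
          C (e ⟨i / q ^ k % q, Nat.mod_lt _ hq0⟩ - e ⟨j / q ^ k % q, Nat.mod_lt _ hq0⟩) * X ^ k)
        = T * Lam F (Ndj F (d + 1) 1) := by
      rw [sum_range_mul]
      have hblock : ∀ t ∈ Finset.range T,
          (∑ r ∈ Finset.range B, 2 ^ numRoots F (∑ k ∈ Finset.range (d + 1 + 1),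
            C (e ⟨i / q ^ k % q, Nat.mod_lt _ hq0⟩
              - e ⟨(t * B + r) / q ^ k % q, Nat.mod_lt _ hq0⟩) * X ^ k))
          = Lam F (Ndj F (d + 1) 1) := by
        intro t ht
        rw [Finset.mem_range] at ht
        have htq : t < q := lt_trans ht hTq
        set c : F := e ⟨T, hTq⟩ - e ⟨t, htq⟩ with hc
        have hcne : c ≠ 0 := by
          rw [hc, sub_ne_zero]
          exact e.injective.ne (by simp [Fin.ext_iff]; omega)
        have hpoly2 : ∀ r ∈ Finset.range B,
            (∑ k ∈ Finset.range (d + 1 + 1),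
              C (e ⟨i / q ^ k % q, Nat.mod_lt _ hq0⟩
                - e ⟨(t * B + r) / q ^ k % q, Nat.mod_lt _ hq0⟩) * X ^ k)
            = gpoly hq0 e (d + 1) (fun k => e ⟨i / q ^ k % q, Nat.mod_lt _ hq0⟩) c r := by
          intro r hr
          rw [Finset.mem_range] at hr
          rw [Finset.sum_range_succ, gpoly, add_comm]
          congr 1
          · congr 2
            rw [hc]
            congr 2
            · apply Fin.ext
              show i / q ^ (d+1) % q = T
              rw [hitop, Nat.mod_eq_of_lt hTq]
            · apply Fin.ext
              show (t * B + r) / q ^ (d+1) % q = t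
              rw [hdig_topd r hr t, Nat.mod_eq_of_lt htq]
          · apply Finset.sum_congr rfl
            intro k hk
            rw [Finset.mem_range] at hk
            rw [emk ((t * B + r) / q ^ k) (r / q ^ k) (hdig_shift t k hk r)]
        rw [Finset.sum_congr rfl (fun r hr => by rw [hpoly2 r hr])]
        rw [hB, ← lam_eq_param hq0 e (d + 1) _ c, lam_scale (d + 1) hcne]
      rw [Finset.sum_congr rfl hblock, Finset.sum_const, Finset.card_range, smul_eq_mul]
    rw [hsplit, Finset.sum_union hdisj, hA, hBsum]
    rw [Finset.sum_range_succ (fun m => (i / q ^ m % q) * Lam F (Ndj F m 1)) (d + 1)]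
    have : i / q ^ (d + 1) % q = T := by rw [hitop, Nat.mod_eq_of_lt hTq]
    rw [this]
    ring

theorem enumPoly_sub (d a b : ℕ) :
    enumPoly q hq0 e d a - enumPoly q hq0 e d b
      = ∑ k ∈ Finset.range (d + 1),
          C (e ⟨a / q ^ k % q, Nat.mod_lt _ hq0⟩ - e ⟨b / q ^ k % q, Nat.mod_lt _ hq0⟩) * X ^ k := by
  rw [enumPoly, enumPoly, ← Finset.sum_sub_distrib]
  apply Finset.sum_congr rfl
  intro k _
  rw [map_sub, sub_mul]

include hq0 e in
theorem lam_N0 (hq1 : 1 < q) (ks : ℕ) :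
    Lam F (Ndj F ks (0 : F)) = 1 + ∑ m ∈ Finset.range ks, (q - 1) * Lam F (Ndj F m 1) := by
  have hpk : 0 < q ^ ks := pow_pos hq0 _
  have hlt : q ^ ks - 1 < q ^ (ks + 1) := by
    have : q ^ ks ≤ q ^ (ks + 1) := Nat.pow_le_pow_right (by omega) (by omega)
    omega
  have h1 := main_sum hq0 e ks (q ^ ks - 1) hlt
  rw [Nat.sub_add_cancel (by omega)] at h1
  have hdigtop : (q ^ ks - 1) / q ^ ks = 0 := Nat.div_eq_of_lt (by omega)
  have hpoly : ∀ j ∈ Finset.range (q ^ ks),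
      (∑ k ∈ Finset.range (ks + 1),
        C (e ⟨(q ^ ks - 1) / q ^ k % q, Nat.mod_lt _ hq0⟩ - e ⟨j / q ^ k % q, Nat.mod_lt _ hq0⟩) * X ^ k)
      = gpoly hq0 e ks (fun k => e ⟨(q ^ ks - 1) / q ^ k % q, Nat.mod_lt _ hq0⟩) 0 j := by
    intro j hj
    rw [Finset.mem_range] at hj
    rw [Finset.sum_range_succ, gpoly, add_comm]
    have h2 : (⟨(q ^ ks - 1) / q ^ ks % q, Nat.mod_lt _ hq0⟩ : Fin q)
        = ⟨j / q ^ ks % q, Nat.mod_lt _ hq0⟩ := by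
      apply Fin.ext
      show (q ^ ks - 1) / q ^ ks % q = j / q ^ ks % q
      rw [hdigtop, Nat.div_eq_of_lt hj]
    rw [h2, sub_self, map_zero, zero_mul]
  have h2sum : ∑ j ∈ Finset.range (q ^ ks),
      2 ^ numRoots F (∑ k ∈ Finset.range (ks + 1),
        C (e ⟨(q ^ ks - 1) / q ^ k % q, Nat.mod_lt _ hq0⟩ - e ⟨j / q ^ k % q, Nat.mod_lt _ hq0⟩) * X ^ k)
      = ∑ j ∈ Finset.range (q ^ ks),
      2 ^ numRoots F (gpoly hq0 e ks (fun k => e ⟨(q ^ ks - 1) / q ^ k % q, Nat.mod_lt _ hq0⟩) 0 j) :=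
    Finset.sum_congr rfl (fun j hj => by rw [hpoly j hj])
  rw [h2sum, ← lam_eq_param hq0 e ks _ 0] at h1
  rw [h1, Finset.sum_range_succ]
  have hd0 : (q ^ ks - 1) / q ^ ks % q = 0 := by rw [hdigtop]; simp
  rw [hd0, zero_mul, add_zero]
  congr 1
  apply Finset.sum_congr rfl
  intro m hm
  rw [Finset.mem_range] at hm
  congr 1
  have hone : q ^ ks * 1 - 1 = q ^ ks - 1 := by rw [mul_one]
  rw [← hone]
  exact dig_pow_mul_pred_lt hq0 hm le_rfl

end Aux

/-- With the base-q digit enumeration φ_i, for every i < q^q,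
Σ_{j=0}^{i} 2^{λ(φ_i − φ_j)} = Σ_{k=k*}^{d} a_k·Λ(N_{k,1}) − Λ(N_{k*,1}) + Λ(N_{k*,0}),
where d = ⌊log(i+1)/log q⌋, a_k = ⌊(i+1)/q^k⌋ mod q, and k* is the least k with a_k ≠ 0. -/
theorem sum_two_pow_numRoots_eq (q : ℕ) (F : Type) [Field F] [Fintype F]
    (hF : Fintype.card F = q) (hq0 : 0 < q) (hq1 : 1 < q)
    (e : Fin q ≃ F) (he : e ⟨0, hq0⟩ = 0)
    (i : ℕ) (hi : i < q ^ q)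
    (kstar : ℕ) (hk1 : (i + 1) / q ^ kstar % q ≠ 0)
    (hk2 : ∀ k < kstar, (i + 1) / q ^ k % q = 0) :
    ((∑ j ∈ Finset.range (i + 1),
        2 ^ (numRoots F (enumPoly q hq0 e (Nat.log q (i + 1)) i
            - enumPoly q hq0 e (Nat.log q (i + 1)) j)) : ℕ) : ℤ)
      = (∑ k ∈ Finset.Icc kstar (Nat.log q (i + 1)),
            ((i + 1) / q ^ k % q : ℤ) * (Lam F (Ndj F k 1) : ℤ))
          - (Lam F (Ndj F kstar 1) : ℤ) + (Lam F (Ndj F kstar 0) : ℤ) := by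
  set d := Nat.log q (i + 1) with hd
  have hid : i < q ^ (d + 1) := by
    have h := Nat.lt_pow_succ_log_self hq1 (i + 1)
    rw [Nat.succ_eq_add_one, ← hd] at h
    omega
  have hL : (∑ j ∈ Finset.range (i + 1),
      2 ^ (numRoots F (enumPoly q hq0 e d i - enumPoly q hq0 e d j)))
      = 1 + ∑ m ∈ Finset.range (d + 1), i / q ^ m % q * Lam F (Ndj F m 1) := by
    rw [Finset.sum_congr rfl (fun j _ => by rw [enumPoly_sub hq0 e d i j])]
    exact main_sum hq0 e d i hid
  rw [hL]
  have hks_le : q ^ kstar ≤ i + 1 := by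
    by_contra h
    push_neg at h
    rw [Nat.div_eq_of_lt h] at hk1
    simp at hk1
  have hkd : kstar ≤ d := Nat.le_log_of_pow_le hq1 hks_le
  have hdvd : ∀ k, k ≤ kstar → q ^ k ∣ i + 1 := by
    intro k
    induction k with
    | zero => intro _; simp
    | succ k ihk =>
      intro hk
      obtain ⟨c, hc⟩ := ihk (by omega)
      have h2 := hk2 k (by omega)
      rw [hc, Nat.mul_div_cancel_left _ (pow_pos hq0 _)] at h2
      rw [pow_succ, hc]
      exact Nat.mul_dvd_mul_left _ (Nat.dvd_of_mod_eq_zero h2)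
  set M := (i + 1) / q ^ kstar with hMdef
  have hM : i + 1 = q ^ kstar * M := (Nat.mul_div_cancel' (hdvd kstar le_rfl)).symm
  have hMq : M % q ≠ 0 := hk1
  have hM1 : 1 ≤ M := by
    rcases Nat.eq_zero_or_pos M with h | h
    · rw [h, Nat.mul_zero] at hM; omega
    · exact h
  have hieq : i = q ^ kstar * M - 1 := by omega
  have hilow : ∀ m, m < kstar → i / q ^ m % q = q - 1 := by
    intro m hm
    rw [hieq]
    exact dig_pow_mul_pred_lt hq0 hm hM1
  have hMq1 : 1 ≤ M % q := Nat.one_le_iff_ne_zero.mpr hMq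
  have hik : i / q ^ kstar % q = M % q - 1 := by
    rw [hieq, pow_mul_pred_div hq0 le_rfl hM1, Nat.sub_self, pow_zero, one_mul]
    have hlt : M % q < q := Nat.mod_lt _ hq0
    have key : M - 1 = (M % q - 1) + M / q * q := by
      have hd2 : M / q * q + M % q = M := Nat.div_add_mod' M q
      generalize hA : M / q * q = A at hd2 ⊢
      omega
    rw [key, Nat.add_mul_mod_self_right, Nat.mod_eq_of_lt (by omega)]
  have hihigh : ∀ m, kstar < m → i / q ^ m % q = (i + 1) / q ^ m % q := by
    intro m hm
    have h1 : q ^ m = q ^ kstar * q ^ (m - kstar) := by rw [← pow_add]; congr 1; omega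
    have h2 : i / q ^ m = (M - 1) / q ^ (m - kstar) := by
      rw [h1, ← Nat.div_div_eq_div_mul]
      congr 1
      rw [hieq, pow_mul_pred_div hq0 le_rfl hM1, Nat.sub_self, pow_zero, one_mul]
    have h3 : (i + 1) / q ^ m = M / q ^ (m - kstar) := by
      rw [h1, ← Nat.div_div_eq_div_mul, ← hMdef]
    rw [h2, h3, pred_div_eq hq0 hMq (by omega)]
  -- algebra
  rw [lam_N0 hq0 e hq1 kstar]
  -- split the LHS sum
  have hsplitL : ∑ m ∈ Finset.range (d + 1), i / q ^ m % q * Lam F (Ndj F m 1)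
      = (∑ m ∈ Finset.range kstar, i / q ^ m % q * Lam F (Ndj F m 1))
        + ∑ m ∈ Finset.Ico kstar (d + 1), i / q ^ m % q * Lam F (Ndj F m 1) := by
    rw [Finset.range_eq_Ico, ← Finset.sum_Ico_consecutive _ (Nat.zero_le kstar) (by omega),
      ← Finset.range_eq_Ico]
  rw [hsplitL]
  rw [Finset.sum_eq_sum_Ico_succ_bot (show kstar < d + 1 by omega)
    (fun m => i / q ^ m % q * Lam F (Ndj F m 1))]
  rw [show Finset.Icc kstar d = Finset.Ico kstar (d + 1) from (Finset.Ico_add_one_right_eq_Icc kstar d).symm]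
  rw [Finset.sum_eq_sum_Ico_succ_bot (show kstar < d + 1 by omega)
    (fun k => ((i + 1) / q ^ k % q : ℤ) * (Lam F (Ndj F k 1) : ℤ))]
  have hlow_sum : ∑ m ∈ Finset.range kstar, i / q ^ m % q * Lam F (Ndj F m 1)
      = ∑ m ∈ Finset.range kstar, (q - 1) * Lam F (Ndj F m 1) :=
    Finset.sum_congr rfl (fun m hm => by rw [hilow m (Finset.mem_range.mp hm)])
  rw [hlow_sum, hik]
  have hhigh_sum : ∑ m ∈ Finset.Ico (kstar + 1) (d + 1),
        ((i + 1) / q ^ m % q : ℤ) * (Lam F (Ndj F m 1) : ℤ)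
      = ∑ m ∈ Finset.Ico (kstar + 1) (d + 1),
        ((i / q ^ m % q : ℕ) : ℤ) * (Lam F (Ndj F m 1) : ℤ) :=
    Finset.sum_congr rfl (fun m hm => by
      rw [hihigh m (by exact (Finset.mem_Ico.mp hm).1)]
      push_cast
      ring)
  rw [hhigh_sum]
  have htopcast : ((i : ℤ) + 1) / (q : ℤ) ^ kstar % (q : ℤ) = ((M % q : ℕ) : ℤ) := by
    rw [hMdef]
    push_cast
    ring
  rw [htopcast]
  push_cast [Nat.cast_sub hMq1, Nat.cast_sub (le_of_lt hq1)]
  ring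
end
end

section
/- For every prime power q and every positive integer n ≤ q^q, the refined Nisan-Wigderson construction yields a family of n subsets S_0,…,S_{n−1} of [q^2], each of size q, such that for every i < n, Σ_{j<i} 2^{|S_i ∩ S_j|} ≤ (i+1)·(1+1/q)^q < (i+1)·e; in particular it is a weak (n, q, q^2, ρ)-design with ρ < e. -/
open Polynomial

noncomputable section
open scoped Classical

namespace NWaux
variable {F : Type} [Field F] [Fintype F]

/-- number of points where ψ vanishes -/
def rc (ψ : Polynomial F) : ℕ := (Finset.univ.filter fun x => ψ.eval x = 0).card

def polv (c : F) (k : ℕ) (v : Fin k → F) : Polynomial F :=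
  Polynomial.C c * Polynomial.X ^ k + ∑ t : Fin k, Polynomial.C (v t) * Polynomial.X ^ (t : ℕ)

set_option linter.unusedSectionVars false

lemma sum_coeff (k : ℕ) (v : Fin k → F) (n : ℕ) :
    (∑ t : Fin k, Polynomial.C (v t) * Polynomial.X ^ (t : ℕ)).coeff n =
      if h : n < k then v ⟨n, h⟩ else 0 := by
  rw [Polynomial.finset_sum_coeff]
  simp only [Polynomial.coeff_C_mul, Polynomial.coeff_X_pow, mul_ite, mul_one, mul_zero]
  by_cases h : n < k
  · rw [dif_pos h]
    rw [Finset.sum_eq_single (⟨n, h⟩ : Fin k)]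
    · simp
    · intro t _ ht
      rw [if_neg]
      intro hc
      exact ht (by ext; simp [hc])
    · simp
  · rw [dif_neg h]
    apply Finset.sum_eq_zero
    intro t _
    rw [if_neg]
    intro hc
    exact h (hc ▸ t.isLt)

lemma polv_coeff (c : F) (k : ℕ) (v : Fin k → F) (n : ℕ) :
    (polv c k v).coeff n = if n = k then c else if h : n < k then v ⟨n, h⟩ else 0 := by
  rw [polv, Polynomial.coeff_add, sum_coeff, Polynomial.coeff_C_mul, Polynomial.coeff_X_pow]
  by_cases h : n = k
  · simp [h]
  · simp [h]

lemma polv_natDegree (c : F) (hc : c ≠ 0) (k : ℕ) (v : Fin k → F) :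
    (polv c k v).natDegree = k := by
  apply le_antisymm
  · apply Polynomial.natDegree_le_iff_coeff_eq_zero.2
    intro n hn
    rw [polv_coeff, if_neg (by omega), dif_neg (by omega)]
  · apply Polynomial.le_natDegree_of_ne_zero
    rw [polv_coeff, if_pos rfl]
    exact hc

lemma polv_ne_zero (c : F) (hc : c ≠ 0) (k : ℕ) (v : Fin k → F) :
    polv c k v ≠ 0 := by
  intro h
  have := polv_coeff c k v k
  rw [h, if_pos rfl] at this
  exact hc (by simpa using this.symm)

lemma polv_leadingCoeff (c : F) (hc : c ≠ 0) (k : ℕ) (v : Fin k → F) :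
    (polv c k v).leadingCoeff = c := by
  rw [Polynomial.leadingCoeff, polv_natDegree c hc, polv_coeff, if_pos rfl]

lemma polv_inj (c : F) (k : ℕ) {v v' : Fin k → F} (h : polv c k v = polv c k v') :
    v = v' := by
  funext t
  have := congrArg (fun p => Polynomial.coeff p (t : ℕ)) h
  simp only [polv_coeff, if_neg (Nat.ne_of_lt t.isLt), dif_pos t.isLt] at this
  simpa using this

lemma val_le_roots (ψ : Polynomial F) (hψ : ψ ≠ 0) (R : Finset F)
    (hR : ∀ a ∈ R, ψ.eval a = 0) : R.val ≤ ψ.roots :=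
  (Multiset.le_iff_subset R.nodup).2 (fun a ha =>
    (Polynomial.mem_roots hψ).2 (hR a ha))

lemma prod_dvd (ψ : Polynomial F) (hψ : ψ ≠ 0) (R : Finset F)
    (hR : ∀ a ∈ R, ψ.eval a = 0) : (∏ a ∈ R, (Polynomial.X - Polynomial.C a)) ∣ ψ := by
  have := (Multiset.prod_X_sub_C_dvd_iff_le_roots hψ R.val).2 (val_le_roots ψ hψ R hR)
  rwa [Finset.prod_eq_multiset_prod]

lemma count_vanish (c : F) (hc : c ≠ 0) (k : ℕ) (R : Finset F) :
    ((Finset.univ : Finset (Fin k → F)).filter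
        (fun v => ∀ a ∈ R, (polv c k v).eval a = 0)).card ≤
      if R.card ≤ k then (Fintype.card F) ^ (k - R.card) else 0 := by
  by_cases hRk : R.card ≤ k
  · rw [if_pos hRk]
    set m : Polynomial F := ∏ a ∈ R, (Polynomial.X - Polynomial.C a) with hm
    have hmon : m.Monic := Polynomial.monic_prod_of_monic _ _ (fun a _ => Polynomial.monic_X_sub_C a)
    have hmdeg : m.natDegree = R.card := by
      rw [hm, Polynomial.natDegree_prod _ _ (fun a _ => Polynomial.X_sub_C_ne_zero a)]
      simp
    have key : ∀ v ∈ (Finset.univ : Finset (Fin k → F)).filter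
        (fun v => ∀ a ∈ R, (polv c k v).eval a = 0),
        (polv c k v /ₘ m).natDegree = k - R.card ∧
          (polv c k v /ₘ m).leadingCoeff = c ∧ polv c k v = m * (polv c k v /ₘ m) := by
      intro v hv
      rw [Finset.mem_filter] at hv
      have hdvd := prod_dvd _ (polv_ne_zero c hc k v) R hv.2
      have hmod : polv c k v %ₘ m = 0 :=
        (Polynomial.modByMonic_eq_zero_iff_dvd hmon).2 hdvd
      have heqn : polv c k v = m * (polv c k v /ₘ m) := by
        have := Polynomial.modByMonic_add_div (polv c k v) m
        rw [hmod, zero_add] at this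
        exact this.symm
      set u := polv c k v /ₘ m with hu
      have hu0 : u ≠ 0 := by
        intro h; exact polv_ne_zero c hc k v (by rw [heqn, h, mul_zero])
      refine ⟨?_, ?_, heqn⟩
      · have := Polynomial.natDegree_mul (hmon.ne_zero) hu0
        rw [← heqn, polv_natDegree c hc, hmdeg] at this
        omega
      · have := congrArg Polynomial.leadingCoeff heqn
        rw [polv_leadingCoeff c hc, Polynomial.leadingCoeff_mul, hmon.leadingCoeff, one_mul] at this
        exact this.symm
    have hinj : Set.InjOn (fun v : Fin k → F => fun t : Fin (k - R.card) =>
          ((polv c k v) /ₘ m).coeff (t : ℕ))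
        ((Finset.univ : Finset (Fin k → F)).filter
          (fun v => ∀ a ∈ R, (polv c k v).eval a = 0)) := by
      intro v hv v' hv' heq
      obtain ⟨hud, huc, heqn⟩ := key v hv
      obtain ⟨hud', huc', heqn'⟩ := key v' hv'
      have huu : polv c k v /ₘ m = polv c k v' /ₘ m := by
        apply Polynomial.ext
        intro t
        rcases lt_trichotomy t (k - R.card) with h | h | h
        · exact congrFun heq ⟨t, h⟩
        · subst h
          rw [← hud, Polynomial.coeff_natDegree, huc, hud, ← hud', Polynomial.coeff_natDegree, huc']
        · rw [Polynomial.coeff_eq_zero_of_natDegree_lt (hud ▸ h),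
            Polynomial.coeff_eq_zero_of_natDegree_lt (hud' ▸ h)]
      exact polv_inj c k (by rw [heqn, heqn', huu])
    have := Finset.card_le_card_of_injOn _ (fun v _ => Finset.mem_univ _) hinj
    calc _ ≤ (Finset.univ : Finset (Fin (k - R.card) → F)).card := this
      _ = (Fintype.card F) ^ (k - R.card) := by
          rw [Finset.card_univ, Fintype.card_fun]
          simp
  · rw [if_neg hRk, Nat.le_zero, Finset.card_eq_zero, Finset.filter_eq_empty_iff]
    intro v _ hall
    have h2 := Multiset.card_le_card (val_le_roots _ (polv_ne_zero c hc k v) R hall)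
    have h3 := Polynomial.card_roots' (polv c k v)
    rw [polv_natDegree c hc] at h3
    simp only [Finset.card] at hRk
    omega

/-- the ℕ-valued bound -/
def Bnat (q k : ℕ) : ℕ :=
  ∑ r ∈ Finset.range (q + 1), q.choose r * (if r ≤ k then q ^ (k - r) else 0)

lemma two_pow_rc (ψ : Polynomial F) :
    2 ^ rc ψ = ((Finset.univ : Finset F).powerset.filter
      (fun R => ∀ a ∈ R, ψ.eval a = 0)).card := by
  rw [rc, ← Finset.card_powerset]
  congr 1
  ext R
  simp only [Finset.mem_powerset, Finset.mem_filter, Finset.subset_iff, Finset.mem_filter,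
    Finset.mem_univ, true_and]
  tauto

lemma key_sum (c : F) (hc : c ≠ 0) (k : ℕ) :
    ∑ v : Fin k → F, 2 ^ rc (polv c k v) ≤ Bnat (Fintype.card F) k := by
  have h1 : ∑ v : Fin k → F, 2 ^ rc (polv c k v) =
      ∑ R ∈ (Finset.univ : Finset F).powerset,
        ((Finset.univ : Finset (Fin k → F)).filter
          (fun v => ∀ a ∈ R, (polv c k v).eval a = 0)).card := by
    simp_rw [two_pow_rc, Finset.card_filter]
    rw [Finset.sum_comm]
  rw [h1]
  calc ∑ R ∈ (Finset.univ : Finset F).powerset,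
        ((Finset.univ : Finset (Fin k → F)).filter
          (fun v => ∀ a ∈ R, (polv c k v).eval a = 0)).card
      ≤ ∑ R ∈ (Finset.univ : Finset F).powerset,
          (if R.card ≤ k then (Fintype.card F) ^ (k - R.card) else 0) :=
        Finset.sum_le_sum (fun R _ => count_vanish c hc k R)
    _ = Bnat (Fintype.card F) k := by
        rw [Finset.sum_powerset]
        rw [Bnat, Finset.card_univ]
        apply Finset.sum_congr rfl
        intro r _
        rw [Finset.sum_congr rfl (fun R hR => by
          rw [(Finset.mem_powersetCard.1 hR).2]), Finset.sum_const,
          Finset.card_powersetCard, Finset.card_univ, smul_eq_mul]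

lemma Bnat_le (q k : ℕ) (hq : 0 < q) :
    (Bnat q k : ℝ) ≤ (q : ℝ) ^ k * (1 + 1 / (q : ℝ)) ^ q := by
  have hq' : (0 : ℝ) < q := by exact_mod_cast hq
  have h2 : (1 + 1 / (q : ℝ)) ^ q = ∑ r ∈ Finset.range (q + 1),
      (1 / (q : ℝ)) ^ r * q.choose r := by
    rw [add_comm, add_pow]
    apply Finset.sum_congr rfl
    intro r _
    rw [one_pow, mul_one]
  rw [h2, Finset.mul_sum, Bnat]
  push_cast
  apply Finset.sum_le_sum
  intro r _
  rcases le_or_gt r k with h | h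
  · rw [if_pos h]
    have : (q : ℝ) ^ (k - r) = (q : ℝ) ^ k * (1 / (q : ℝ)) ^ r := by
      rw [one_div, inv_pow, eq_comm, mul_inv_eq_iff_eq_mul₀ (by positivity), ← pow_add,
        Nat.sub_add_cancel h]
    rw [this]; ring_nf; exact le_refl _
  · rw [if_neg (by omega)]
    rw [mul_zero]
    positivity

lemma one_add_inv_pow_lt_exp (q : ℕ) (hq : 0 < q) :
    (1 + 1 / (q : ℝ)) ^ q < Real.exp 1 := by
  have hq' : (0 : ℝ) < q := by exact_mod_cast hq
  have h1 : (1 : ℝ) + 1 / q < Real.exp (1 / q) := by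
    have := Real.add_one_lt_exp (x := 1 / (q : ℝ)) (by positivity)
    linarith
  calc (1 + 1 / (q : ℝ)) ^ q < Real.exp (1 / q) ^ q := by
        apply pow_lt_pow_left₀ h1 (by positivity) (by omega)
    _ = Real.exp 1 := by
        rw [← Real.exp_nat_mul]
        congr 1
        field_simp

lemma digits_inj (q : ℕ) (hq : 0 < q) : ∀ (k j j' : ℕ),
    (∀ t ≤ k, j / q ^ t % q = j' / q ^ t % q) → j / q ^ (k + 1) = j' / q ^ (k + 1) →
    j = j' := by
  intro k
  induction k with
  | zero =>
    intro j j' hd hh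
    have h0 := hd 0 le_rfl
    simp only [pow_zero, Nat.div_one] at h0
    rw [pow_one] at hh
    calc j = q * (j / q) + j % q := (Nat.div_add_mod j q).symm
      _ = q * (j' / q) + j' % q := by rw [hh, h0]
      _ = j' := Nat.div_add_mod j' q
  | succ k ih =>
    intro j j' hd hh
    apply ih j j' (fun t ht => hd t (by omega))
    have h1 : j / q ^ (k + 1) / q = j' / q ^ (k + 1) / q := by
      rw [Nat.div_div_eq_div_mul, Nat.div_div_eq_div_mul, ← pow_succ]
      exact hh
    have h2 := hd (k + 1) le_rfl
    calc j / q ^ (k + 1) = q * (j / q ^ (k + 1) / q) + j / q ^ (k + 1) % q :=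
        (Nat.div_add_mod _ q).symm
      _ = q * (j' / q ^ (k + 1) / q) + j' / q ^ (k + 1) % q := by rw [h1, h2]
      _ = j' / q ^ (k + 1) := Nat.div_add_mod _ q

lemma Ico_facts (q : ℕ) (hq : 0 < q) (i k j : ℕ)
    (hj : j ∈ Finset.Ico (i / q ^ (k + 1) * q ^ (k + 1)) (i / q ^ k * q ^ k)) :
    j / q ^ (k + 1) = i / q ^ (k + 1) ∧ j / q ^ k % q < i / q ^ k % q ∧
      j / q ^ k % q = (j - i / q ^ (k + 1) * q ^ (k + 1)) / q ^ k := by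
  rw [Finset.mem_Ico] at hj
  have hqk : 0 < q ^ k := Nat.pow_pos hq
  have hqk1 : 0 < q ^ (k + 1) := Nat.pow_pos hq
  have hdd : i / q ^ k / q = i / q ^ (k + 1) := by
    rw [Nat.div_div_eq_div_mul, ← pow_succ]
  have hsplit : i / q ^ k = i / q ^ (k + 1) * q + i / q ^ k % q := by
    conv_lhs => rw [← Nat.div_add_mod (i / q ^ k) q]
    rw [hdd]; ring
  set A := i / q ^ (k + 1) * q ^ (k + 1) with hA
  set p := j - A with hp
  have hjAp : j = A + p := by omega
  have hBA : i / q ^ k * q ^ k = A + (i / q ^ k % q) * q ^ k := by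
    conv_lhs => rw [hsplit]
    rw [add_mul, hA, pow_succ]
    ring
  have hplt : p < (i / q ^ k % q) * q ^ k := by omega
  have hmodlt : i / q ^ k % q < q := Nat.mod_lt _ hq
  have hpq : p < q ^ (k + 1) := by
    calc p < (i / q ^ k % q) * q ^ k := hplt
      _ ≤ q * q ^ k := Nat.mul_le_mul_right _ (by omega)
      _ = q ^ (k + 1) := by rw [pow_succ]; ring
  have hpdig : p / q ^ k < i / q ^ k % q := (Nat.div_lt_iff_lt_mul hqk).2 hplt
  have h1 : j / q ^ (k + 1) = i / q ^ (k + 1) := by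
    rw [hjAp, hA, add_comm, Nat.add_mul_div_right _ _ hqk1, Nat.div_eq_of_lt hpq, zero_add]
  have h2 : j / q ^ k % q = p / q ^ k := by
    have : j = p + i / q ^ (k + 1) * q * q ^ k := by
      rw [hjAp, hA, pow_succ]; ring
    rw [this, Nat.add_mul_div_right _ _ hqk, Nat.add_mul_mod_self_right,
      Nat.mod_eq_of_lt (by omega)]
  exact ⟨h1, by omega, by rw [h2]⟩

lemma sum_Ico_digits (q : ℕ) (hq : 1 < q) (g : ℕ → ℕ) (i K : ℕ) (hi : i < q ^ K) :
    ∑ j ∈ Finset.range i, g j =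
      ∑ k ∈ Finset.range K, ∑ j ∈ Finset.Ico (i / q ^ (k + 1) * q ^ (k + 1))
        (i / q ^ k * q ^ k), g j := by
  have key : ∀ K' : ℕ, ∑ j ∈ Finset.Ico (i / q ^ K' * q ^ K') i, g j =
      ∑ k ∈ Finset.range K', ∑ j ∈ Finset.Ico (i / q ^ (k + 1) * q ^ (k + 1))
        (i / q ^ k * q ^ k), g j := by
    intro K'
    induction K' with
    | zero => simp
    | succ K' ih =>
      have hle1 : i / q ^ (K' + 1) * q ^ (K' + 1) ≤ i / q ^ K' * q ^ K' := by
        have : i / q ^ (K' + 1) * q ^ (K' + 1) = (i / q ^ K' / q * q) * q ^ K' := by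
          rw [Nat.div_div_eq_div_mul, ← pow_succ, pow_succ]; ring
        rw [this]
        exact Nat.mul_le_mul_right _ (Nat.div_mul_le_self _ _)
      have hle2 : i / q ^ K' * q ^ K' ≤ i := Nat.div_mul_le_self _ _
      rw [Finset.sum_range_succ, ← ih, ← Finset.sum_Ico_consecutive g hle1 hle2]
      ring
  have h0 : i / q ^ K = 0 := Nat.div_eq_of_lt hi
  have := key K
  rwa [h0, zero_mul, ← Finset.range_eq_Ico] at this

lemma digit_expansion (q : ℕ) (hq : 1 < q) (i K : ℕ) (hi : i < q ^ K) :
    ∑ k ∈ Finset.range K, i / q ^ k % q * q ^ k = i := by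
  have := sum_Ico_digits q hq (fun _ => 1) i K hi
  simp only [Finset.sum_const, smul_eq_mul, mul_one, Finset.card_range, Nat.card_Ico] at this
  conv_rhs => rw [this]
  apply Finset.sum_congr rfl
  intro k _
  have hdd : i / q ^ k = i / q ^ (k + 1) * q + i / q ^ k % q := by
    conv_lhs => rw [← Nat.div_add_mod (i / q ^ k) q]
    rw [Nat.div_div_eq_div_mul, ← pow_succ]; ring
  have : i / q ^ k * q ^ k = i / q ^ (k + 1) * q ^ (k + 1) + i / q ^ k % q * q ^ k := by
    conv_lhs => rw [hdd]
    rw [add_mul, pow_succ]; ring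
  omega

def dig (q : ℕ) (hq : 0 < q) (i t : ℕ) : Fin q := ⟨i / q ^ t % q, Nat.mod_lt _ hq⟩

lemma NWset_card (φ : Polynomial F) : (NWset F φ).card = Fintype.card F := by
  rw [NWset, Finset.card_image_of_injective _ (fun a b h => congrArg Prod.fst h),
    Finset.card_univ]

lemma NWset_inter_card (φ ψ : Polynomial F) :
    (NWset F φ ∩ NWset F ψ).card = rc (φ - ψ) := by
  have himg : NWset F φ ∩ NWset F ψ =
      (Finset.univ.filter fun x => (φ - ψ).eval x = 0).image (fun x => (x, φ.eval x)) := by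
    ext ⟨a, b⟩
    simp only [Finset.mem_inter, NWset, Finset.mem_image, Finset.mem_filter, Finset.mem_univ,
      true_and, Prod.mk.injEq, Polynomial.eval_sub, sub_eq_zero]
    aesop
  rw [himg, Finset.card_image_of_injective _ (fun a b h => congrArg Prod.fst h), rc]

lemma enumPoly_coeff (q : ℕ) (hq : 0 < q) (e : Fin q ≃ F) (d i n : ℕ) :
    (enumPoly q hq e d i).coeff n = if n ≤ d then e (dig q hq i n) else 0 := by
  rw [enumPoly, Polynomial.finset_sum_coeff]
  simp only [Polynomial.coeff_C_mul, Polynomial.coeff_X_pow, mul_ite, mul_one, mul_zero]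
  rw [Finset.sum_ite_eq (Finset.range (d + 1)) n]
  simp [Finset.mem_range, Nat.lt_succ_iff, dig]

lemma enumPoly_sub (q : ℕ) (hq : 0 < q) (e : Fin q ≃ F) (d i j k : ℕ) (hk : k ≤ d)
    (hhigh : ∀ t, k < t → j / q ^ t % q = i / q ^ t % q) :
    enumPoly q hq e d i - enumPoly q hq e d j =
      polv (e (dig q hq i k) - e (dig q hq j k)) k
        (fun t => e (dig q hq i (t : ℕ)) - e (dig q hq j (t : ℕ))) := by
  apply Polynomial.ext
  intro n
  rw [Polynomial.coeff_sub, enumPoly_coeff, enumPoly_coeff, polv_coeff]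
  rcases eq_or_ne n k with h | h
  · subst h
    rw [if_pos hk, if_pos hk, if_pos rfl]
  · rw [if_neg h]
    rcases lt_or_gt_of_ne h with h' | h'
    · rw [dif_pos h', if_pos (by omega), if_pos (by omega)]
    · rw [dif_neg (by omega)]
      by_cases hd : n ≤ d
      · rw [if_pos hd, if_pos hd]
        have : dig q hq j n = dig q hq i n := by
          apply Fin.ext
          exact hhigh n h'
        rw [this, sub_self]
      · rw [if_neg hd, if_neg hd, sub_self]

lemma high_digits (q : ℕ) (hq : 0 < q) (j i k : ℕ) (h : j / q ^ (k + 1) = i / q ^ (k + 1)) :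
    ∀ t, k < t → j / q ^ t % q = i / q ^ t % q := by
  intro t ht
  have key : ∀ m : ℕ, m / q ^ t = m / q ^ (k + 1) / q ^ (t - (k + 1)) := by
    intro m
    rw [Nat.div_div_eq_div_mul, ← pow_add]
    congr 2
    omega
  rw [key j, key i, h]

lemma inner_bound (q : ℕ) (hq : 0 < q) (hq2 : 1 < q) (hF : Fintype.card F = q)
    (e : Fin q ≃ F) (d i k : ℕ) (hk : k ≤ d) :
    ∑ j ∈ Finset.Ico (i / q ^ (k + 1) * q ^ (k + 1)) (i / q ^ k * q ^ k),
        2 ^ rc (enumPoly q hq e d i - enumPoly q hq e d j)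
      ≤ (i / q ^ k % q) * Bnat q k := by
  classical
  set Ik := Finset.Ico (i / q ^ (k + 1) * q ^ (k + 1)) (i / q ^ k * q ^ k) with hIk
  set f : ℕ → ℕ × (Fin k → F) := fun j =>
    (j / q ^ k % q, fun t => e (dig q hq i (t : ℕ)) - e (dig q hq j (t : ℕ))) with hf
  set g : ℕ × (Fin k → F) → ℕ := fun x =>
    2 ^ rc (polv (e (dig q hq i k) - e ⟨x.1 % q, Nat.mod_lt _ hq⟩) k x.2) with hg
  have hval : ∀ j ∈ Ik, 2 ^ rc (enumPoly q hq e d i - enumPoly q hq e d j) = g (f j) := by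
    intro j hj
    obtain ⟨h1, h2, _⟩ := Ico_facts q hq i k j hj
    have hmm : (⟨(j / q ^ k % q) % q, Nat.mod_lt _ hq⟩ : Fin q) = dig q hq j k := by
      apply Fin.ext
      simp [dig, Nat.mod_mod_of_dvd, Nat.mod_eq_of_lt (Nat.mod_lt _ hq)]
    rw [hg]
    simp only [hf]
    rw [hmm, enumPoly_sub q hq e d i j k hk (high_digits q hq j i k h1)]
  have hmaps : ∀ j ∈ Ik, f j ∈ (Finset.range (i / q ^ k % q)) ×ˢ
      (Finset.univ : Finset (Fin k → F)) := by
    intro j hj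
    obtain ⟨h1, h2, _⟩ := Ico_facts q hq i k j hj
    rw [Finset.mem_product]
    exact ⟨Finset.mem_range.2 h2, Finset.mem_univ _⟩
  have hinj : ∀ j ∈ Ik, ∀ j' ∈ Ik, f j = f j' → j = j' := by
    intro j hj j' hj' hff
    obtain ⟨h1, _, _⟩ := Ico_facts q hq i k j hj
    obtain ⟨h1', _, _⟩ := Ico_facts q hq i k j' hj'
    rw [Prod.ext_iff] at hff
    obtain ⟨hfst, hsnd⟩ := hff
    apply digits_inj q hq k j j'
    · intro t ht
      rcases eq_or_lt_of_le ht with h | h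
      · subst h; exact hfst
      · have hdiff := congrFun hsnd ⟨t, h⟩
        have hee : e (dig q hq j t) = e (dig q hq j' t) := sub_right_injective hdiff
        exact congrArg Fin.val (e.injective hee)
    · rw [h1, h1']
  calc ∑ j ∈ Ik, 2 ^ rc (enumPoly q hq e d i - enumPoly q hq e d j)
      = ∑ j ∈ Ik, g (f j) := Finset.sum_congr rfl hval
    _ = ∑ x ∈ Ik.image f, g x := (Finset.sum_image hinj).symm
    _ ≤ ∑ x ∈ (Finset.range (i / q ^ k % q)) ×ˢ (Finset.univ : Finset (Fin k → F)), g x :=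
        Finset.sum_le_sum_of_subset (Finset.image_subset_iff.2 hmaps)
    _ = ∑ b ∈ Finset.range (i / q ^ k % q), ∑ v : Fin k → F, g (b, v) := Finset.sum_product _ _ _
    _ ≤ ∑ _b ∈ Finset.range (i / q ^ k % q), Bnat q k := by
        apply Finset.sum_le_sum
        intro b hb
        have hb' : b < i / q ^ k % q := Finset.mem_range.1 hb
        have hblt : b < q := lt_trans hb' (Nat.mod_lt _ hq)
        have hc : e (dig q hq i k) - e ⟨b % q, Nat.mod_lt _ hq⟩ ≠ 0 := by
          rw [sub_ne_zero]
          intro hcon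
          have hv := congrArg Fin.val (e.injective hcon)
          simp only [dig] at hv
          rw [Nat.mod_eq_of_lt hblt] at hv
          omega
        have hks := key_sum (e (dig q hq i k) - e ⟨b % q, Nat.mod_lt _ hq⟩) hc k
        rw [hF] at hks
        exact hks
    _ = (i / q ^ k % q) * Bnat q k := by
        rw [Finset.sum_const, smul_eq_mul, Finset.card_range]

end NWaux

/-- For every prime power q and positive n ≤ q^q, the refined
Nisan-Wigderson construction (S_i from the base-q digit enumeration of polynomials
of degree at most d = ⌈log n/log q − 1⌉) gives n subsets of [q^2] ≅ GF(q)×GF(q),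
each of size q, with Σ_{j<i} 2^{|S_i ∩ S_j|} ≤ (i+1)·(1+1/q)^q < (i+1)·e for every
i < n; in particular a weak (n,q,q^2,ρ)-design with ρ < e. -/
theorem refined_NW_weak_design (q n : ℕ) (F : Type) [Field F] [Fintype F]
    (hF : Fintype.card F = q) (hq0 : 0 < q) (hn : 0 < n) (hnq : n ≤ q ^ q)
    (e : Fin q ≃ F) (he : e ⟨0, hq0⟩ = 0) :
    (∀ i < n,
      (NWset F (enumPoly q hq0 e (Nat.clog q n - 1) i)).card = q ∧
      ((∑ j ∈ Finset.range i,
          2 ^ ((NWset F (enumPoly q hq0 e (Nat.clog q n - 1) i)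
              ∩ NWset F (enumPoly q hq0 e (Nat.clog q n - 1) j)).card) : ℕ) : ℝ)
        ≤ (i + 1) * (1 + 1 / (q : ℝ)) ^ q) ∧
    (1 + 1 / (q : ℝ)) ^ q < Real.exp 1 ∧
    (∀ i < n,
      ((∑ j ∈ Finset.range i,
          2 ^ ((NWset F (enumPoly q hq0 e (Nat.clog q n - 1) i)
              ∩ NWset F (enumPoly q hq0 e (Nat.clog q n - 1) j)).card) : ℕ) : ℝ)
        < (n : ℝ) * Real.exp 1) := by
  classical
  have hq2 : 1 < q := by
    have := Fintype.one_lt_card (α := F)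
    omega
  set d := Nat.clog q n - 1 with hd
  have hnpow : n ≤ q ^ (d + 1) := by
    rcases eq_or_lt_of_le (Nat.succ_le_of_lt hn) with h | h
    · rw [← h]
      exact Nat.one_le_pow _ _ (by omega)
    · have hc := Nat.clog_pos hq2 h
      have hdc : d + 1 = Nat.clog q n := by omega
      rw [hdc]
      exact Nat.le_pow_clog hq2 n
  have main : ∀ i < n,
      ((∑ j ∈ Finset.range i,
          2 ^ ((NWset F (enumPoly q hq0 e d i) ∩ NWset F (enumPoly q hq0 e d j)).card) : ℕ) : ℝ)
        ≤ (i + 1) * (1 + 1 / (q : ℝ)) ^ q := by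
    intro i hi
    have hiq : i < q ^ (d + 1) := lt_of_lt_of_le hi hnpow
    have step1 : (∑ j ∈ Finset.range i,
        2 ^ ((NWset F (enumPoly q hq0 e d i) ∩ NWset F (enumPoly q hq0 e d j)).card)) =
        ∑ j ∈ Finset.range i, 2 ^ NWaux.rc (enumPoly q hq0 e d i - enumPoly q hq0 e d j) :=
      Finset.sum_congr rfl (fun j _ => by rw [NWaux.NWset_inter_card])
    have step2 := NWaux.sum_Ico_digits q hq2
      (fun j => 2 ^ NWaux.rc (enumPoly q hq0 e d i - enumPoly q hq0 e d j)) i (d + 1) hiq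
    have step3 : ∑ k ∈ Finset.range (d + 1), ∑ j ∈ Finset.Ico (i / q ^ (k + 1) * q ^ (k + 1))
          (i / q ^ k * q ^ k), 2 ^ NWaux.rc (enumPoly q hq0 e d i - enumPoly q hq0 e d j)
        ≤ ∑ k ∈ Finset.range (d + 1), (i / q ^ k % q) * NWaux.Bnat q k :=
      Finset.sum_le_sum (fun k hk => NWaux.inner_bound q hq0 hq2 hF e d i k
        (by have := Finset.mem_range.1 hk; omega))
    have hde := NWaux.digit_expansion q hq2 i (d + 1) hiq
    calc ((∑ j ∈ Finset.range i,
          2 ^ ((NWset F (enumPoly q hq0 e d i) ∩ NWset F (enumPoly q hq0 e d j)).card) : ℕ) : ℝ)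
        = ((∑ k ∈ Finset.range (d + 1), (i / q ^ k % q) * NWaux.Bnat q k : ℕ) : ℝ) -
            (((∑ k ∈ Finset.range (d + 1), (i / q ^ k % q) * NWaux.Bnat q k : ℕ) : ℝ) -
              ((∑ j ∈ Finset.range i,
          2 ^ ((NWset F (enumPoly q hq0 e d i) ∩ NWset F (enumPoly q hq0 e d j)).card) : ℕ) : ℝ)) := by
          ring
      _ ≤ ((∑ k ∈ Finset.range (d + 1), (i / q ^ k % q) * NWaux.Bnat q k : ℕ) : ℝ) := by
          have hle : (∑ j ∈ Finset.range i,
              2 ^ ((NWset F (enumPoly q hq0 e d i) ∩ NWset F (enumPoly q hq0 e d j)).card) : ℕ)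
              ≤ ∑ k ∈ Finset.range (d + 1), (i / q ^ k % q) * NWaux.Bnat q k := by
            rw [step1, step2]
            exact step3
          have : ((∑ j ∈ Finset.range i,
              2 ^ ((NWset F (enumPoly q hq0 e d i) ∩ NWset F (enumPoly q hq0 e d j)).card) : ℕ) : ℝ)
              ≤ ((∑ k ∈ Finset.range (d + 1), (i / q ^ k % q) * NWaux.Bnat q k : ℕ) : ℝ) := by
            exact_mod_cast hle
          linarith
      _ = ∑ k ∈ Finset.range (d + 1), ((i / q ^ k % q : ℕ) : ℝ) * ((NWaux.Bnat q k : ℕ) : ℝ) := by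
          push_cast
          rfl
      _ ≤ ∑ k ∈ Finset.range (d + 1), ((i / q ^ k % q : ℕ) : ℝ) *
            ((q : ℝ) ^ k * (1 + 1 / (q : ℝ)) ^ q) :=
          Finset.sum_le_sum (fun k _ => mul_le_mul_of_nonneg_left
            (NWaux.Bnat_le q k hq0) (by positivity))
      _ = (∑ k ∈ Finset.range (d + 1), ((i / q ^ k % q : ℕ) : ℝ) * (q : ℝ) ^ k) *
            (1 + 1 / (q : ℝ)) ^ q := by
          rw [Finset.sum_mul]
          exact Finset.sum_congr rfl (fun k _ => (mul_assoc _ _ _).symm)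
      _ = (i : ℝ) * (1 + 1 / (q : ℝ)) ^ q := by
          congr 1
          have : ∑ k ∈ Finset.range (d + 1), ((i / q ^ k % q : ℕ) : ℝ) * (q : ℝ) ^ k =
              ((∑ k ∈ Finset.range (d + 1), i / q ^ k % q * q ^ k : ℕ) : ℝ) := by
            push_cast
            rfl
          rw [this, hde]
      _ ≤ ((i : ℝ) + 1) * (1 + 1 / (q : ℝ)) ^ q := by
          apply mul_le_mul_of_nonneg_right (by linarith) (by positivity)
  refine ⟨fun i hi => ⟨by rw [NWaux.NWset_card, hF], main i hi⟩,
    NWaux.one_add_inv_pow_lt_exp q hq0, fun i hi => ?_⟩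
  calc ((∑ j ∈ Finset.range i,
        2 ^ ((NWset F (enumPoly q hq0 e d i) ∩ NWset F (enumPoly q hq0 e d j)).card) : ℕ) : ℝ)
      ≤ ((i : ℝ) + 1) * (1 + 1 / (q : ℝ)) ^ q := main i hi
    _ < ((i : ℝ) + 1) * Real.exp 1 := by
        apply mul_lt_mul_of_pos_left (NWaux.one_add_inv_pow_lt_exp q hq0) (by positivity)
    _ ≤ (n : ℝ) * Real.exp 1 := by
        apply mul_le_mul_of_nonneg_right _ (Real.exp_pos 1).le
        have : (i : ℝ) + 1 ≤ (n : ℝ) := by exact_mod_cast hi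
        exact this
end
end
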